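/- arXiv:1302.0709 — 6 statements merged into one kernel-verified Lean document; each statement's English description precedes it below -/
import Mathlib

section
/- Let Γ be a finite multigraph, s a counting function on Γ, and M any marking of the fattened graph Γ_fat compatible with s. Then there exists a flow in the network N_{Γ,s} whose value equals cr(M); in particular cr(M) ≤ X_{Γ,s}, the maximal flow value of N_{Γ,s}. -/
/-! Each crossing edge of `M` has one half in `M` and the other outside it. Route one unit of
flow from the source to the vertex of the unmarked half, along the edge to the vertex of the
marked half, and on to the sink (skipping the middle arc for a loop). Conservation holds route
by route, so the sum of these routes is a flow of value `cr M`; it respects the capacities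
because distinct crossing edges leave through distinct unmarked halves at `v` (there are
`t v` of those), arrive through distinct marked halves (`s v`), and are distinct edges. -/

/-- A finite multigraph: finite vertex and edge types, each edge has an
ordered pair of (possibly equal) endpoints. -/
structure Multigraph where
  V : Type
  E : Type
  [fintV : Fintype V]
  [fintE : Fintype E]
  [decV : DecidableEq V]
  [decE : DecidableEq E]
  ends : E → V × V

attribute [instance] Multigraph.fintV Multigraph.fintE Multigraph.decV Multigraph.decE

namespace Multigraph

variable (G : Multigraph)

/-- A half-edge of `G`: each edge `e` contributes the two half-edges
`(e, false)` (at the first endpoint) and `(e, true)` (at the second endpoint). -/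
abbrev Half := G.E × Bool

/-- The vertex at which a half-edge sits. -/
def vertexOf (h : G.Half) : G.V := if h.2 then (G.ends h.1).2 else (G.ends h.1).1

/-- The degree of a vertex: the number of half-edges at it (loops count twice). -/
def deg (v : G.V) : ℕ := (Finset.univ.filter fun h : G.Half => G.vertexOf h = v).card

/-- A marking `M` (a set of half-edges) is compatible with the counting function `s`
if it contains exactly `s v` half-edges at each vertex `v`. -/
def Compatible (s : G.V → ℕ) (M : Finset G.Half) : Prop :=
  ∀ v : G.V, (M.filter fun h : G.Half => G.vertexOf h = v).card = s v

/-- The number of crossings of a marking `M`: the number of edges having exactly one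
of their two half-edges in `M`. -/
def cr (M : Finset G.Half) : ℕ :=
  (Finset.univ.filter fun e : G.E =>
    ((e, false) ∈ M ∧ (e, true) ∉ M) ∨ ((e, false) ∉ M ∧ (e, true) ∈ M)).card

/-- The area `|∂S|` of the pair `(G, s)`: the maximum number of crossings over
all markings compatible with `s`. -/
noncomputable def area (s : G.V → ℕ) : ℕ :=
  sSup {k : ℕ | ∃ M : Finset G.Half, G.Compatible s M ∧ G.cr M = k}

/-- Nodes of the network `N_{Γ,s}`: the vertices of `G` together with a
source (`Sum.inr true`) and a sink (`Sum.inr false`). -/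
abbrev Node := G.V ⊕ Bool

/-- The source of the network. -/
def source : G.Node := Sum.inr true

/-- The sink of the network. -/
def sink : G.Node := Sum.inr false

/-- The number of edges of `G` joining `v` and `w`. -/
def edgesBetween (v w : G.V) : ℕ :=
  (Finset.univ.filter fun e : G.E => G.ends e = (v, w) ∨ G.ends e = (w, v)).card

/-- The capacities of the network `N_{Γ,s}`: `t v = deg v - s v` from the source to `v`,
`s v` from `v` to the sink, the number of edges between `v` and `w` for distinct
vertices `v, w`, and `0` otherwise. -/
def cap (s : G.V → ℕ) : G.Node → G.Node → ℕ
  | Sum.inr true, Sum.inl v => G.deg v - s v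
  | Sum.inl v, Sum.inr false => s v
  | Sum.inl v, Sum.inl w => if v = w then 0 else G.edgesBetween v w
  | _, _ => 0

/-- A flow in the network `N_{Γ,s}`: dominated by the capacities, and the inflow equals
the outflow at every node of `V`. -/
def IsFlow (s : G.V → ℕ) (f : G.Node → G.Node → ℕ) : Prop :=
  (∀ x y : G.Node, f x y ≤ G.cap s x y) ∧
    ∀ v : G.V, (∑ x : G.Node, f x (Sum.inl v)) = ∑ x : G.Node, f (Sum.inl v) x

/-- The value of a flow: the total flow out of the source. -/
def flowValue (f : G.Node → G.Node → ℕ) : ℕ := ∑ x : G.Node, f G.source x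

/-- The maximal flow value `X_{Γ,s}` of the network `N_{Γ,s}`. -/
noncomputable def maxFlow (s : G.V → ℕ) : ℕ :=
  sSup {k : ℕ | ∃ f : G.Node → G.Node → ℕ, G.IsFlow s f ∧ G.flowValue f = k}

end Multigraph

namespace Multigraph

section Routes

variable {V ι : Type*} [DecidableEq V]

/-- One unit of flow along the route `source → a → b → sink` (the source is `.inr true`, the
sink `.inr false`), the middle arc omitted when `a = b`. -/
def routeFlow (a b : V) (x y : V ⊕ Bool) : ℕ :=
  if (x = .inr true ∧ y = .inl a) ∨ (x = .inl a ∧ y = .inl b ∧ a ≠ b) ∨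
      (x = .inl b ∧ y = .inr false) then 1 else 0

def routesFlow (T : Finset ι) (a b : ι → V) (x y : V ⊕ Bool) : ℕ :=
  ∑ i ∈ T, routeFlow (a i) (b i) x y

lemma routesFlow_source_inl (T : Finset ι) (a b : ι → V) (v : V) :
    routesFlow T a b (.inr true) (.inl v) = (T.filter (a · = v)).card := by
  simp [routesFlow, routeFlow, Finset.sum_boole, eq_comm]

lemma routesFlow_inl_sink (T : Finset ι) (a b : ι → V) (v : V) :
    routesFlow T a b (.inl v) (.inr false) = (T.filter (b · = v)).card := by
  simp [routesFlow, routeFlow, Finset.sum_boole, eq_comm]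

lemma routesFlow_inl_inl (T : Finset ι) (a b : ι → V) {v w : V} (hvw : v ≠ w) :
    routesFlow T a b (.inl v) (.inl w) = (T.filter fun i => a i = v ∧ b i = w).card := by
  simp only [routesFlow, routeFlow, reduceCtorEq, Sum.inl.injEq, false_and, false_or,
    Finset.sum_boole, Nat.cast_id]
  congr 1
  ext i
  simp only [Finset.mem_filter]
  grind

lemma routesFlow_inl_self (T : Finset ι) (a b : ι → V) (v : V) :
    routesFlow T a b (.inl v) (.inl v) = 0 := by
  simp +contextual [routesFlow, routeFlow]

variable [Fintype V]

lemma sum_routeFlow_in_eq_out (a b v : V) :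
    ∑ x, routeFlow a b x (.inl v) = ∑ x, routeFlow a b (.inl v) x := by
  simp only [routeFlow, Fintype.sum_sum_type, Fintype.sum_bool]
  by_cases hva : v = a <;> by_cases hvb : v = b <;> simp_all [ite_and, eq_comm]

lemma sum_routeFlow_source (a b : V) : ∑ x, routeFlow a b (.inr true) x = 1 := by
  simp [routeFlow]

lemma sum_routesFlow_in_eq_out (T : Finset ι) (a b : ι → V) (v : V) :
    ∑ x, routesFlow T a b x (.inl v) = ∑ x, routesFlow T a b (.inl v) x := by
  unfold routesFlow
  rw [Finset.sum_comm]
  conv_rhs => rw [Finset.sum_comm]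
  exact Finset.sum_congr rfl fun i _ => sum_routeFlow_in_eq_out _ _ v

lemma sum_routesFlow_source (T : Finset ι) (a b : ι → V) :
    ∑ x, routesFlow T a b (.inr true) x = T.card := by
  unfold routesFlow
  rw [Finset.sum_comm]
  simp only [sum_routeFlow_source, Finset.sum_const, smul_eq_mul, mul_one]

end Routes

variable (G : Multigraph)

lemma isFlow_routesFlow {ι : Type*} (s : G.V → ℕ) (T : Finset ι) (a b : ι → G.V)
    (h_source : ∀ v, (T.filter (a · = v)).card ≤ G.deg v - s v)
    (h_sink : ∀ v, (T.filter (b · = v)).card ≤ s v)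
    (h_edges : ∀ v w, v ≠ w → (T.filter fun i => a i = v ∧ b i = w).card ≤ G.edgesBetween v w) :
    G.IsFlow s (routesFlow T a b) := by
  refine ⟨?_, sum_routesFlow_in_eq_out T a b⟩
  rintro (v | c) (w | d)
  · by_cases hvw : v = w
    · subst hvw
      simp [routesFlow_inl_self, cap]
    · simpa [routesFlow_inl_inl T a b hvw, cap, hvw] using h_edges v w hvw
  · cases d
    · simpa [routesFlow_inl_sink, cap] using h_sink v
    · simp [routesFlow, routeFlow, cap]
  · cases c
    · simp [routesFlow, routeFlow, cap]
    · simpa [routesFlow_source_inl, cap] using h_source w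
  · cases c <;> cases d <;> simp [routesFlow, routeFlow, cap]

lemma flowValue_le_maxFlow {s : G.V → ℕ} {f : G.Node → G.Node → ℕ} (hf : G.IsFlow s f) :
    G.flowValue f ≤ G.maxFlow s := by
  refine le_csSup ⟨∑ x, G.cap s G.source x, ?_⟩ ⟨f, hf, rfl⟩
  rintro _ ⟨g, hg, rfl⟩
  exact Finset.sum_le_sum fun x _ => hg.1 G.source x

lemma ends_eq_or_swap (e : G.E) (b : Bool) :
    G.ends e = (G.vertexOf (e, !b), G.vertexOf (e, b)) ∨
      G.ends e = (G.vertexOf (e, b), G.vertexOf (e, !b)) := by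
  cases b <;> simp [vertexOf]

lemma card_compl_filter_vertexOf {s : G.V → ℕ} {M : Finset G.Half} (hM : G.Compatible s M)
    (v : G.V) : (Mᶜ.filter (G.vertexOf · = v)).card = G.deg v - s v := by
  have hsplit := Finset.card_filter_add_card_filter_not
    (s := Finset.univ.filter (G.vertexOf · = v)) (· ∈ M)
  have h_mem : (Finset.univ.filter (G.vertexOf · = v)).filter (· ∈ M) =
      M.filter (G.vertexOf · = v) := by ext; simp [and_comm]
  have h_not_mem : (Finset.univ.filter (G.vertexOf · = v)).filter (· ∉ M) =
      Mᶜ.filter (G.vertexOf · = v) := by ext; simp [and_comm]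
  rw [h_mem, h_not_mem, hM v] at hsplit
  unfold deg
  omega

lemma card_filter_vertexOf_le {T : Finset G.E} {H : Finset G.Half} (side : G.E → Bool)
    (hT : ∀ e ∈ T, (e, side e) ∈ H) (v : G.V) :
    (T.filter fun e => G.vertexOf (e, side e) = v).card ≤ (H.filter (G.vertexOf · = v)).card := by
  refine Finset.card_le_card_of_injOn (fun e => (e, side e)) (fun e he => ?_)
    fun e _ e' _ h => congrArg Prod.fst h
  simp only [Finset.mem_coe, Finset.mem_filter] at he ⊢
  exact ⟨hT e he.1, he.2⟩

def crossingEdges (M : Finset G.Half) : Finset G.E :=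
  Finset.univ.filter fun e : G.E =>
    ((e, false) ∈ M ∧ (e, true) ∉ M) ∨ ((e, false) ∉ M ∧ (e, true) ∈ M)

/-- On a crossing edge `e`, `(e, markedSide M e)` is the half in `M`. -/
def markedSide (M : Finset G.Half) (e : G.E) : Bool := decide ((e, true) ∈ M)

lemma mem_and_mem_compl_of_mem_crossingEdges {M : Finset G.Half} {e : G.E}
    (he : e ∈ G.crossingEdges M) :
    (e, G.markedSide M e) ∈ M ∧ (e, !G.markedSide M e) ∈ Mᶜ := by
  simp only [crossingEdges, Finset.mem_filter, Finset.mem_univ, true_and] at he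
  unfold markedSide
  by_cases h : (e, true) ∈ M <;> simp_all

def crossingFlow (M : Finset G.Half) : G.Node → G.Node → ℕ :=
  routesFlow (G.crossingEdges M) (fun e => G.vertexOf (e, !G.markedSide M e))
    (fun e => G.vertexOf (e, G.markedSide M e))

lemma isFlow_crossingFlow {s : G.V → ℕ} {M : Finset G.Half} (hM : G.Compatible s M) :
    G.IsFlow s (G.crossingFlow M) := by
  refine G.isFlow_routesFlow s _ _ _ (fun v => ?_) (fun v => ?_) fun v w _ => ?_
  · exact (G.card_filter_vertexOf_le (fun e => !G.markedSide M e)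
      (fun e he => (G.mem_and_mem_compl_of_mem_crossingEdges he).2) v).trans_eq
      (G.card_compl_filter_vertexOf hM v)
  · exact (G.card_filter_vertexOf_le (G.markedSide M)
      (fun e he => (G.mem_and_mem_compl_of_mem_crossingEdges he).1) v).trans_eq (hM v)
  · refine Finset.card_le_card fun e he => ?_
    obtain ⟨-, rfl, rfl⟩ := Finset.mem_filter.mp he
    exact Finset.mem_filter.mpr ⟨Finset.mem_univ e, G.ends_eq_or_swap e _⟩

lemma flowValue_crossingFlow (M : Finset G.Half) : G.flowValue (G.crossingFlow M) = G.cr M :=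
  sum_routesFlow_source _ _ _

end Multigraph

theorem flow_of_marking_general (G : Multigraph) (s : G.V → ℕ)
    (M : Finset G.Half) (hM : G.Compatible s M) :
    (∃ f : G.Node → G.Node → ℕ, G.IsFlow s f ∧ G.flowValue f = G.cr M) ∧
      G.cr M ≤ G.maxFlow s :=
  ⟨⟨G.crossingFlow M, G.isFlow_crossingFlow hM, G.flowValue_crossingFlow M⟩,
    G.flowValue_crossingFlow M ▸ G.flowValue_le_maxFlow (G.isFlow_crossingFlow hM)⟩

/-- For any compatible marking `M` there is a flow in the network
`N_{Γ,s}` whose value equals `cr M`; in particular `cr M ≤ X_{Γ,s}`. -/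
theorem flow_of_marking (G : Multigraph) (s : G.V → ℕ)
    (hs : ∀ v : G.V, s v ≤ G.deg v)
    (M : Finset G.Half) (hM : G.Compatible s M) :
    (∃ f : G.Node → G.Node → ℕ, G.IsFlow s f ∧ G.flowValue f = G.cr M) ∧
      G.cr M ≤ G.maxFlow s :=
  flow_of_marking_general G s M hM
end

section
/- Let Γ be a finite multigraph and s a counting function on Γ. For every flow f in the network N_{Γ,s} there exists a marking M of the fattened graph Γ_fat compatible with s such that cr(M) is at least the value of f. In particular X_{Γ,s} is at most the maximum of cr(M) over compatible markings M. -/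
namespace MarkingOfFlowAux

open Finset

variable (G : Multigraph) (s : G.V → ℕ)

lemma cap_to_source (x : G.Node) : G.cap s x (Sum.inr true) = 0 := by
  cases x with
  | inl v => rfl
  | inr b => cases b <;> rfl

lemma cap_from_sink (y : G.Node) : G.cap s (Sum.inr false) y = 0 := by
  cases y with
  | inl v => rfl
  | inr b => cases b <;> rfl

lemma cap_source_sink : G.cap s (Sum.inr true) (Sum.inr false) = 0 := rfl

lemma cap_source_source : G.cap s (Sum.inr true) (Sum.inr true) = 0 := rfl

/-- The residual relation of a flow. -/
def Rres (f : G.Node → G.Node → ℕ) (x y : G.Node) : Prop :=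
  f x y < G.cap s x y ∨ 0 < f y x

/-- Residual reachability within `n` steps. -/
def reachIn (f : G.Node → G.Node → ℕ) : ℕ → G.Node → Prop
  | 0 => fun z => z = G.source
  | n+1 => fun z => reachIn f n z ∨ ∃ y, reachIn f n y ∧ Rres G s f y z

lemma reachIn_succ_of {f} {n} {z} (h : reachIn G s f n z) : reachIn G s f (n+1) z :=
  Or.inl h

lemma reachIn_mono {f} {m n} (hmn : m ≤ n) {z} (h : reachIn G s f m z) :
    reachIn G s f n z := by
  induction n with
  | zero => simpa [Nat.le_zero.mp hmn] using h
  | succ n ih =>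
    rcases Nat.lt_or_ge m (n+1) with h' | h'
    · exact Or.inl (ih (Nat.lt_succ_iff.mp h'))
    · have : m = n + 1 := le_antisymm hmn h'
      subst this; exact h

lemma reachIn_source (f : G.Node → G.Node → ℕ) (n : ℕ) : reachIn G s f n G.source := by
  induction n with
  | zero => rfl
  | succ n ih => exact Or.inl ih

/-- Residual reachability. -/
def Reach (f : G.Node → G.Node → ℕ) (z : G.Node) : Prop := ∃ n, reachIn G s f n z

lemma reach_source (f : G.Node → G.Node → ℕ) : Reach G s f G.source := ⟨0, rfl⟩

lemma reach_step {f} {y z : G.Node} (hy : Reach G s f y) (h : Rres G s f y z) :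
    Reach G s f z := by
  obtain ⟨n, hn⟩ := hy
  exact ⟨n+1, Or.inr ⟨y, hn, h⟩⟩

end MarkingOfFlowAux
namespace MarkingOfFlowAux

section Sums

variable (G : Multigraph) (s : G.V → ℕ)

lemma flow_to_source {f : G.Node → G.Node → ℕ} (hf : G.IsFlow s f) (x : G.Node) :
    f x (Sum.inr true) = 0 :=
  Nat.le_zero.mp (le_of_le_of_eq (hf.1 x _) (cap_to_source G s x))

lemma flow_from_sink {f : G.Node → G.Node → ℕ} (hf : G.IsFlow s f) (y : G.Node) :
    f (Sum.inr false) y = 0 :=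
  Nat.le_zero.mp (le_of_le_of_eq (hf.1 _ y) (cap_from_sink G s y))

lemma sum_node (g : G.Node → ℕ) :
    (∑ x : G.Node, g x) = (∑ v : G.V, g (Sum.inl v)) + (g (Sum.inr true) + g (Sum.inr false)) := by
  rw [Fintype.sum_sum_type]
  simp [Fintype.sum_bool]

/-- Conservation, unpacked. -/
lemma conserve {f : G.Node → G.Node → ℕ} (hf : G.IsFlow s f) (v : G.V) :
    f (Sum.inr true) (Sum.inl v) + ∑ w : G.V, f (Sum.inl w) (Sum.inl v) =
      f (Sum.inl v) (Sum.inr false) + ∑ w : G.V, f (Sum.inl v) (Sum.inl w) := by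
  have h := hf.2 v
  rw [sum_node, sum_node] at h
  rw [flow_to_source G s hf, flow_from_sink G s hf] at h
  omega

/-- The value of a flow equals the total flow into the sink. -/
lemma value_eq_sink_sum {f : G.Node → G.Node → ℕ} (hf : G.IsFlow s f) :
    G.flowValue f = ∑ v : G.V, f (Sum.inl v) (Sum.inr false) := by
  have hv : G.flowValue f = ∑ v : G.V, f (Sum.inr true) (Sum.inl v) := by
    show (∑ x : G.Node, f (Sum.inr true) x) = _
    rw [sum_node]
    have h1 : f (Sum.inr true) (Sum.inr true) = 0 := flow_to_source G s hf _
    have h2 : f (Sum.inr true) (Sum.inr false) = 0 :=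
      Nat.le_zero.mp (le_of_le_of_eq (hf.1 _ _) (cap_source_sink G s))
    omega
  have h := Finset.sum_congr rfl (fun v (_ : v ∈ Finset.univ) => conserve G s hf v)
  rw [Finset.sum_add_distrib, Finset.sum_add_distrib, Finset.sum_comm] at h
  omega

lemma value_le_sum_s {f : G.Node → G.Node → ℕ} (hf : G.IsFlow s f) :
    G.flowValue f ≤ ∑ v : G.V, s v := by
  rw [value_eq_sink_sum G s hf]
  exact Finset.sum_le_sum fun v _ => hf.1 (Sum.inl v) (Sum.inr false)

end Sums

section BumpDrop

variable {G : Multigraph}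

/-- Add one unit of flow on the arc `(p, q)`. -/
def bump (g : G.Node → G.Node → ℕ) (p q : G.Node) : G.Node → G.Node → ℕ :=
  fun x y => g x y + (if x = p ∧ y = q then 1 else 0)

/-- Remove one unit of flow on the arc `(p, q)`. -/
def drop (g : G.Node → G.Node → ℕ) (p q : G.Node) : G.Node → G.Node → ℕ :=
  fun x y => g x y - (if x = p ∧ y = q then 1 else 0)

lemma bump_sum_in (g : G.Node → G.Node → ℕ) (p q c : G.Node) :
    (∑ x : G.Node, bump g p q x c) = (∑ x : G.Node, g x c) + (if c = q then 1 else 0) := by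
  unfold bump
  rw [Finset.sum_add_distrib]
  congr 1
  by_cases h : c = q <;> simp [h]

lemma bump_sum_out (g : G.Node → G.Node → ℕ) (p q c : G.Node) :
    (∑ y : G.Node, bump g p q c y) = (∑ y : G.Node, g c y) + (if c = p then 1 else 0) := by
  unfold bump
  rw [Finset.sum_add_distrib]
  congr 1
  by_cases h : c = p <;> simp [h]

lemma drop_sum_in (g : G.Node → G.Node → ℕ) (p q : G.Node) (hpq : 0 < g p q) (c : G.Node) :
    (∑ x : G.Node, g x c) = (∑ x : G.Node, drop g p q x c) + (if c = q then 1 else 0) := by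
  unfold drop
  by_cases h : c = q
  · subst h
    have key : ∀ x : G.Node,
        (g x c - if x = p ∧ c = c then 1 else 0) + (if x = p then 1 else 0) = g x c := by
      intro x
      by_cases hx : x = p
      · subst hx; simp; omega
      · simp [hx]
    calc (∑ x : G.Node, g x c)
        = ∑ x : G.Node, ((g x c - if x = p ∧ c = c then 1 else 0) + (if x = p then 1 else 0)) :=
          (Finset.sum_congr rfl fun x _ => (key x).symm)
      _ = (∑ x : G.Node, (g x c - if x = p ∧ c = c then 1 else 0))
            + ∑ x : G.Node, (if x = p then 1 else 0) := Finset.sum_add_distrib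
      _ = (∑ x : G.Node, (g x c - if x = p ∧ c = c then 1 else 0)) + (if c = c then 1 else 0) := by
          simp
  · simp only [h, if_false, add_zero]
    apply Finset.sum_congr rfl
    intro x _
    simp [h]

lemma drop_sum_out (g : G.Node → G.Node → ℕ) (p q : G.Node) (hpq : 0 < g p q) (c : G.Node) :
    (∑ y : G.Node, g c y) = (∑ y : G.Node, drop g p q c y) + (if c = p then 1 else 0) := by
  unfold drop
  by_cases h : c = p
  · subst h
    have key : ∀ y : G.Node,
        (g c y - if c = c ∧ y = q then 1 else 0) + (if y = q then 1 else 0) = g c y := by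
      intro y
      by_cases hy : y = q
      · subst hy; simp; omega
      · simp [hy]
    calc (∑ y : G.Node, g c y)
        = ∑ y : G.Node, ((g c y - if c = c ∧ y = q then 1 else 0) + (if y = q then 1 else 0)) :=
          (Finset.sum_congr rfl fun y _ => (key y).symm)
      _ = (∑ y : G.Node, (g c y - if c = c ∧ y = q then 1 else 0))
            + ∑ y : G.Node, (if y = q then 1 else 0) := Finset.sum_add_distrib
      _ = (∑ y : G.Node, (g c y - if c = c ∧ y = q then 1 else 0)) + (if c = c then 1 else 0) := by
          simp
  · simp only [h, if_false, add_zero]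
    apply Finset.sum_congr rfl
    intro y _
    simp [h]

end BumpDrop

end MarkingOfFlowAux
namespace MarkingOfFlowAux

open Finset

variable (G : Multigraph) (s : G.V → ℕ)

lemma sink_ne_source : (G.sink : G.Node) ≠ G.source := by
  simp [Multigraph.sink, Multigraph.source]

/-- Pushing one extra unit from the source to a residually reachable node. -/
lemma push (f : G.Node → G.Node → ℕ) (hf : G.IsFlow s f) :
    ∀ n (z : G.Node), reachIn G s f n z → z ≠ G.source →
    ∃ g : G.Node → G.Node → ℕ,
      (∀ x y, g x y ≤ G.cap s x y) ∧
      (∀ v : G.V, Sum.inl v ≠ z → (∑ x : G.Node, g x (Sum.inl v)) = ∑ x : G.Node, g (Sum.inl v) x) ∧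
      (∀ v : G.V, Sum.inl v = z →
        (∑ x : G.Node, g x (Sum.inl v)) = (∑ x : G.Node, g (Sum.inl v) x) + 1) ∧
      ((∑ x : G.Node, g G.source x) = (∑ x : G.Node, f G.source x) + 1) ∧
      (∀ x y, g x y ≠ f x y → reachIn G s f n x ∧ reachIn G s f n y) := by
  intro n
  induction n with
  | zero =>
    intro z hz hzsrc
    exact absurd hz hzsrc
  | succ n ih =>
    intro z hz hzsrc
    by_cases hzn : reachIn G s f n z
    · obtain ⟨g, h1, h2, h3, h4, h5⟩ := ih z hzn hzsrc
      exact ⟨g, h1, h2, h3, h4, fun x y hxy =>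
        ⟨reachIn_succ_of G s (h5 x y hxy).1, reachIn_succ_of G s (h5 x y hxy).2⟩⟩
    · rcases hz with hz | ⟨y, hy, hr⟩
      · exact absurd hz hzn
      · have hzsucc : reachIn G s f (n+1) z := Or.inr ⟨y, hy, hr⟩
        by_cases hysrc : y = G.source
        · -- first step out of the source
          have hfwd : f y z < G.cap s y z := by
            rcases hr with h | h
            · exact h
            · exfalso
              have h0 : f z y = 0 := by
                rw [hysrc]
                exact flow_to_source G s hf z
              omega
          refine ⟨bump f y z, ?_, ?_, ?_, ?_, ?_⟩
          · intro x y'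
            by_cases hxy : x = y ∧ y' = z
            · obtain ⟨rfl, rfl⟩ := hxy
              simpa [bump] using hfwd
            · simp [bump, hxy, hf.1 x y']
          · intro v hv
            rw [bump_sum_in, bump_sum_out]
            have e1 : (Sum.inl v : G.Node) ≠ z := hv
            have e2 : (Sum.inl v : G.Node) ≠ y := by
              rw [hysrc]; simp [Multigraph.source]
            simp [e1, e2, hf.2 v]
          · intro v hv
            rw [bump_sum_in, bump_sum_out]
            have e2 : (Sum.inl v : G.Node) ≠ y := by
              rw [hysrc]; simp [Multigraph.source]
            rw [if_pos hv, if_neg e2, hf.2 v]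
          · rw [bump_sum_out]
            simp [hysrc]
          · intro x y' hxy
            have : x = y ∧ y' = z := by
              by_contra hc
              simp [bump, hc] at hxy
            obtain ⟨rfl, rfl⟩ := this
            exact ⟨reachIn_mono G s (Nat.zero_le _) (hysrc ▸ rfl), hzsucc⟩
        · -- step from an intermediate node y
          have hyz : y ≠ z := fun h => hzn (h ▸ hy)
          obtain ⟨g, gcap, gcons, gex, gval, gmod⟩ := ih y hy hysrc
          have harc1 : g y z = f y z := by
            by_contra h
            exact hzn (gmod y z h).2
          have harc2 : g z y = f z y := by
            by_contra h
            exact hzn (gmod z y h).1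
          rcases hr with hfwd | hbwd
          · -- forward residual arc
            refine ⟨bump g y z, ?_, ?_, ?_, ?_, ?_⟩
            · intro x y'
              by_cases hxy : x = y ∧ y' = z
              · obtain ⟨rfl, rfl⟩ := hxy
                have hb : bump g x y' x y' = g x y' + 1 := by simp [bump]
                rw [hb, harc1]
                omega
              · simp [bump, hxy, gcap x y']
            · intro v hv
              have hin := bump_sum_in g y z (Sum.inl v)
              have hout := bump_sum_out g y z (Sum.inl v)
              have e1 : (Sum.inl v : G.Node) ≠ z := hv
              rw [if_neg e1] at hin
              by_cases e2 : (Sum.inl v : G.Node) = y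
              · rw [if_pos e2] at hout
                have := gex v e2
                omega
              · rw [if_neg e2] at hout
                have := gcons v e2
                omega
            · intro v hv
              have hin := bump_sum_in g y z (Sum.inl v)
              have hout := bump_sum_out g y z (Sum.inl v)
              have e2 : (Sum.inl v : G.Node) ≠ y := by rw [hv]; exact (Ne.symm hyz)
              rw [if_pos hv] at hin
              rw [if_neg e2] at hout
              have := gcons v e2
              omega
            · have hout := bump_sum_out g y z G.source
              rw [if_neg (Ne.symm hysrc)] at hout
              omega
            · intro x y' hxy
              by_cases hc : x = y ∧ y' = z
              · obtain ⟨rfl, rfl⟩ := hc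
                exact ⟨reachIn_succ_of G s hy, hzsucc⟩
              · have hb : bump g y z x y' = g x y' := by simp [bump, hc]
                rw [hb] at hxy
                exact ⟨reachIn_succ_of G s (gmod x y' hxy).1,
                  reachIn_succ_of G s (gmod x y' hxy).2⟩
          · -- backward residual arc
            have hpos : 0 < g z y := by rw [harc2]; exact hbwd
            refine ⟨drop g z y, ?_, ?_, ?_, ?_, ?_⟩
            · intro x y'
              calc drop g z y x y' ≤ g x y' := Nat.sub_le _ _
                _ ≤ G.cap s x y' := gcap x y'
            · intro v hv
              have hin := drop_sum_in g z y hpos (Sum.inl v)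
              have hout := drop_sum_out g z y hpos (Sum.inl v)
              have e1 : (Sum.inl v : G.Node) ≠ z := hv
              by_cases e2 : (Sum.inl v : G.Node) = y
              · rw [if_pos e2] at hin
                rw [if_neg e1] at hout
                have := gex v e2
                omega
              · rw [if_neg e2] at hin
                rw [if_neg e1] at hout
                have := gcons v e2
                omega
            · intro v hv
              have hin := drop_sum_in g z y hpos (Sum.inl v)
              have hout := drop_sum_out g z y hpos (Sum.inl v)
              have e2 : (Sum.inl v : G.Node) ≠ y := by rw [hv]; exact (Ne.symm hyz)
              rw [if_neg e2] at hin
              rw [if_pos hv] at hout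
              have := gcons v e2
              omega
            · have hout := drop_sum_out g z y hpos G.source
              rw [if_neg (Ne.symm hzsrc)] at hout
              omega
            · intro x y' hxy
              by_cases hc : x = z ∧ y' = y
              · obtain ⟨rfl, rfl⟩ := hc
                exact ⟨hzsucc, reachIn_succ_of G s hy⟩
              · have : drop g z y x y' = g x y' := by simp [drop, hc]
                rw [this] at hxy
                exact ⟨reachIn_succ_of G s (gmod x y' hxy).1,
                  reachIn_succ_of G s (gmod x y' hxy).2⟩

/-- If the sink is residually reachable, the flow can be augmented. -/
lemma augment (f : G.Node → G.Node → ℕ) (hf : G.IsFlow s f)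
    (h : Reach G s f G.sink) :
    ∃ g : G.Node → G.Node → ℕ, G.IsFlow s g ∧ G.flowValue g = G.flowValue f + 1 := by
  obtain ⟨n, hn⟩ := h
  obtain ⟨g, h1, h2, _, h4, _⟩ := push G s f hf n G.sink hn (sink_ne_source G)
  refine ⟨g, ⟨h1, fun v => h2 v (by simp [Multigraph.sink])⟩, h4⟩

end MarkingOfFlowAux
namespace MarkingOfFlowAux

open Finset

open scoped Classical

variable (G : Multigraph) (s : G.V → ℕ) (f : G.Node → G.Node → ℕ)

/-- Saturation of the arcs into the sink from reachable vertices. -/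
lemma sat_sink (hf : G.IsFlow s f) (hns : ¬ Reach G s f G.sink)
    {v : G.V} (hv : Reach G s f (Sum.inl v)) :
    f (Sum.inl v) (Sum.inr false) = s v := by
  have hle : f (Sum.inl v) (Sum.inr false) ≤ s v := hf.1 _ _
  rcases Nat.lt_or_ge (f (Sum.inl v) (Sum.inr false)) (s v) with h | h
  · exact absurd (reach_step G s hv (Or.inl h)) hns
  · omega

/-- Saturation of the arcs out of the source into non-reachable vertices. -/
lemma sat_src (hf : G.IsFlow s f) {w : G.V} (hw : ¬ Reach G s f (Sum.inl w)) :
    f (Sum.inr true) (Sum.inl w) = G.deg w - s w := by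
  have hle : f (Sum.inr true) (Sum.inl w) ≤ G.deg w - s w := hf.1 _ _
  rcases Nat.lt_or_ge (f (Sum.inr true) (Sum.inl w)) (G.deg w - s w) with h | h
  · exact absurd (reach_step G s (reach_source G s f) (Or.inl h)) hw
  · omega

lemma reach_ne {v w : G.V} (hv : Reach G s f (Sum.inl v)) (hw : ¬ Reach G s f (Sum.inl w)) :
    v ≠ w := by
  rintro rfl; exact hw hv

/-- Saturation of the arcs from reachable to non-reachable vertices. -/
lemma sat_AB (hf : G.IsFlow s f) {v w : G.V}
    (hv : Reach G s f (Sum.inl v)) (hw : ¬ Reach G s f (Sum.inl w)) :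
    f (Sum.inl v) (Sum.inl w) = G.edgesBetween v w := by
  have hcap : G.cap s (Sum.inl v) (Sum.inl w) = G.edgesBetween v w := by
    have : v ≠ w := reach_ne G s f hv hw
    simp [Multigraph.cap, this]
  have hle : f (Sum.inl v) (Sum.inl w) ≤ G.edgesBetween v w := hcap ▸ hf.1 _ _
  rcases Nat.lt_or_ge (f (Sum.inl v) (Sum.inl w)) (G.edgesBetween v w) with h | h
  · exact absurd (reach_step G s hv (Or.inl (hcap ▸ h))) hw
  · omega

/-- No flow from non-reachable to reachable vertices. -/
lemma sat_BA (hf : G.IsFlow s f) {v w : G.V}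
    (hv : Reach G s f (Sum.inl v)) (hw : ¬ Reach G s f (Sum.inl w)) :
    f (Sum.inl w) (Sum.inl v) = 0 := by
  by_contra h
  exact hw (reach_step G s hv (Or.inr (Nat.pos_of_ne_zero h)))

lemma vertexOf_false (e : G.E) : G.vertexOf (e, false) = (G.ends e).1 := rfl

lemma vertexOf_true (e : G.E) : G.vertexOf (e, true) = (G.ends e).2 := rfl

/-- Degree sum as an edge count. -/
lemma sum_deg (S : Finset G.V) :
    (∑ v ∈ S, G.deg v) =
      ∑ e : G.E, ((if (G.ends e).1 ∈ S then 1 else 0) + (if (G.ends e).2 ∈ S then 1 else 0)) := by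
  have h1 : (∑ v ∈ S, G.deg v)
      = ∑ v ∈ S, ∑ h : G.Half, (if G.vertexOf h = v then 1 else 0) := by
    apply Finset.sum_congr rfl
    intro v _
    rw [Multigraph.deg, Finset.card_filter]
  rw [h1, Finset.sum_comm]
  rw [Fintype.sum_prod_type]
  apply Finset.sum_congr rfl
  intro e _
  rw [Fintype.sum_bool]
  have h2 : ∀ (u : G.V), (∑ v ∈ S, if u = v then (1:ℕ) else 0) = if u ∈ S then 1 else 0 := by
    intro u
    simp [Finset.sum_ite_eq]
  rw [vertexOf_false, vertexOf_true]
  rw [h2, h2]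
  omega

lemma ind_or {a b : Prop} [Decidable a] [Decidable b] [Decidable (a ∨ b)] (h : ¬(a ∧ b)) :
    (if a ∨ b then (1:ℕ) else 0) = (if a then 1 else 0) + (if b then 1 else 0) := by
  by_cases ha : a <;> by_cases hb : b <;> simp [ha, hb] <;> tauto

lemma edgesBetween_comm (v w : G.V) : G.edgesBetween v w = G.edgesBetween w v := by
  unfold Multigraph.edgesBetween
  congr 1
  apply Finset.filter_congr
  intro e _
  simp [or_comm]

/-- Sums of `edgesBetween` over disjoint vertex sets count connecting edges. -/
lemma pairsum (S X : Finset G.V) (hd : ∀ v ∈ S, v ∉ X) :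
    (∑ v ∈ S, ∑ w ∈ X, G.edgesBetween v w) =
      ∑ e : G.E, (if ((G.ends e).1 ∈ S ∧ (G.ends e).2 ∈ X) ∨
        ((G.ends e).1 ∈ X ∧ (G.ends e).2 ∈ S) then 1 else 0) := by
  have h1 : (∑ v ∈ S, ∑ w ∈ X, G.edgesBetween v w)
      = ∑ v ∈ S, ∑ w ∈ X, ∑ e : G.E,
          (if G.ends e = (v, w) ∨ G.ends e = (w, v) then (1:ℕ) else 0) := by
    apply Finset.sum_congr rfl; intro v _
    apply Finset.sum_congr rfl; intro w _
    rw [Multigraph.edgesBetween, Finset.card_filter]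
  rw [h1]
  rw [Finset.sum_congr rfl (fun v (_ : v ∈ S) => Finset.sum_comm), Finset.sum_comm]
  have h2 : ∀ v ∈ S, ∀ e : G.E, (∑ w ∈ X,
      (if G.ends e = (v, w) ∨ G.ends e = (w, v) then (1:ℕ) else 0)) =
      (∑ w ∈ X, if G.ends e = (v, w) then (1:ℕ) else 0) +
      (∑ w ∈ X, if G.ends e = (w, v) then (1:ℕ) else 0) := by
    intro v hv e
    rw [← Finset.sum_add_distrib]
    apply Finset.sum_congr rfl
    intro w hw
    apply ind_or
    rintro ⟨hA, hB⟩
    rw [hA] at hB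
    have : v = w := congrArg Prod.fst hB
    exact hd v hv (this ▸ hw)
  -- now compute each piece
  have key : ∀ e : G.E, (∑ v ∈ S, ∑ w ∈ X,
      (if G.ends e = (v, w) ∨ G.ends e = (w, v) then (1:ℕ) else 0)) =
      (if ((G.ends e).1 ∈ S ∧ (G.ends e).2 ∈ X) ∨
        ((G.ends e).1 ∈ X ∧ (G.ends e).2 ∈ S) then 1 else 0) := by
    intro e
    have e1 : (∑ v ∈ S, ∑ w ∈ X, if G.ends e = (v, w) then (1:ℕ) else 0)
        = if (G.ends e).1 ∈ S ∧ (G.ends e).2 ∈ X then 1 else 0 := by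
      have : ∀ v w, (if G.ends e = (v, w) then (1:ℕ) else 0) =
          (if (G.ends e).1 = v then (1:ℕ) else 0) * (if (G.ends e).2 = w then (1:ℕ) else 0) := by
        intro v w
        by_cases h1 : (G.ends e).1 = v <;> by_cases h2 : (G.ends e).2 = w <;>
          simp [Prod.ext_iff, h1, h2]
      simp only [this]
      rw [← Finset.sum_mul_sum]
      simp only [Finset.sum_ite_eq, Finset.mem_coe]
      by_cases hS : (G.ends e).1 ∈ S <;> by_cases hX : (G.ends e).2 ∈ X <;> simp [hS, hX]
    have e2 : (∑ v ∈ S, ∑ w ∈ X, if G.ends e = (w, v) then (1:ℕ) else 0)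
        = if (G.ends e).1 ∈ X ∧ (G.ends e).2 ∈ S then 1 else 0 := by
      have : ∀ v w, (if G.ends e = (w, v) then (1:ℕ) else 0) =
          (if (G.ends e).2 = v then (1:ℕ) else 0) * (if (G.ends e).1 = w then (1:ℕ) else 0) := by
        intro v w
        by_cases h1 : (G.ends e).1 = w <;> by_cases h2 : (G.ends e).2 = v <;>
          simp [Prod.ext_iff, h1, h2]
      simp only [this]
      rw [← Finset.sum_mul_sum]
      simp only [Finset.sum_ite_eq, Finset.mem_coe]
      by_cases hS : (G.ends e).2 ∈ S <;> by_cases hX : (G.ends e).1 ∈ X <;> simp [hS, hX]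
    rw [Finset.sum_congr rfl (fun v hv => h2 v hv e), Finset.sum_add_distrib, e1, e2]
    rw [ind_or (by rintro ⟨⟨hA1, hA2⟩, ⟨hB1, hB2⟩⟩; exact hd _ hA1 hB1)]
  exact Finset.sum_congr rfl fun e _ => key e

end MarkingOfFlowAux
namespace MarkingOfFlowAux

open Finset

open scoped Classical

variable (G : Multigraph) (s : G.V → ℕ) (f : G.Node → G.Node → ℕ)

/-- Hall condition on the source side of the cut. -/
lemma hallA (hf : G.IsFlow s f) (hs : ∀ v, s v ≤ G.deg v) (hns : ¬ Reach G s f G.sink)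
    (S : Finset G.V) (hS : ∀ v ∈ S, Reach G s f (Sum.inl v)) :
    (∑ v ∈ S, s v) ≤ (Finset.univ.filter fun e : G.E =>
      (Reach G s f (Sum.inl (G.ends e).1) ∧ Reach G s f (Sum.inl (G.ends e).2)) ∧
      ((G.ends e).1 ∈ S ∨ (G.ends e).2 ∈ S)).card := by
  classical
  set SC : Finset G.V := Finset.univ.filter (fun w => w ∉ S) with hSC
  set X₁ : Finset G.V := Finset.univ.filter (fun w => w ∉ S ∧ Reach G s f (Sum.inl w)) with hX₁
  set X₂ : Finset G.V := Finset.univ.filter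
    (fun w => w ∉ S ∧ ¬ Reach G s f (Sum.inl w)) with hX₂
  -- conservation with saturated sink arcs
  have step1 : ∀ v ∈ S, s v + (∑ w : G.V, f (Sum.inl v) (Sum.inl w)) =
      f (Sum.inr true) (Sum.inl v) + ∑ w : G.V, f (Sum.inl w) (Sum.inl v) := by
    intro v hv
    have h1 := conserve G s hf v
    have h2 := sat_sink G s f hf hns (hS v hv)
    omega
  have h_eq : (∑ v ∈ S, s v) + (∑ v ∈ S, ∑ w : G.V, f (Sum.inl v) (Sum.inl w)) =
      (∑ v ∈ S, f (Sum.inr true) (Sum.inl v)) +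
        ∑ v ∈ S, ∑ w : G.V, f (Sum.inl w) (Sum.inl v) := by
    have := Finset.sum_congr rfl step1
    rw [Finset.sum_add_distrib, Finset.sum_add_distrib] at this
    exact this
  have h_cap : (∑ v ∈ S, f (Sum.inr true) (Sum.inl v)) + (∑ v ∈ S, s v) ≤
      ∑ v ∈ S, G.deg v := by
    rw [← Finset.sum_add_distrib]
    apply Finset.sum_le_sum
    intro v hv
    have h1 : f (Sum.inr true) (Sum.inl v) ≤ G.deg v - s v := hf.1 _ _
    have h2 := hs v
    omega
  -- split the inner sums according to membership in `S`
  have husplit : ∀ g : G.V → ℕ, (∑ w : G.V, g w) = (∑ w ∈ S, g w) + (∑ w ∈ SC, g w) := by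
    intro g
    rw [hSC]
    rw [← Finset.sum_filter_add_sum_filter_not Finset.univ (fun w => w ∈ S) g]
    congr 1
    · congr 1
      ext w
      simp
  have h_in : (∑ v ∈ S, ∑ w : G.V, f (Sum.inl w) (Sum.inl v)) =
      (∑ v ∈ S, ∑ w ∈ S, f (Sum.inl w) (Sum.inl v)) +
      (∑ v ∈ S, ∑ w ∈ SC, f (Sum.inl w) (Sum.inl v)) := by
    rw [← Finset.sum_add_distrib]
    exact Finset.sum_congr rfl fun v _ => husplit _
  have h_out : (∑ v ∈ S, ∑ w : G.V, f (Sum.inl v) (Sum.inl w)) =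
      (∑ v ∈ S, ∑ w ∈ S, f (Sum.inl v) (Sum.inl w)) +
      (∑ v ∈ S, ∑ w ∈ SC, f (Sum.inl v) (Sum.inl w)) := by
    rw [← Finset.sum_add_distrib]
    exact Finset.sum_congr rfl fun v _ => husplit _
  have h_W : (∑ v ∈ S, ∑ w ∈ S, f (Sum.inl w) (Sum.inl v)) =
      (∑ v ∈ S, ∑ w ∈ S, f (Sum.inl v) (Sum.inl w)) := Finset.sum_comm
  -- capacity/saturation bounds on the cross terms
  have h_U : (∑ v ∈ S, ∑ w ∈ SC, f (Sum.inl w) (Sum.inl v)) ≤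
      ∑ v ∈ S, ∑ w ∈ X₁, G.edgesBetween v w := by
    have : ∀ v ∈ S, (∑ w ∈ SC, f (Sum.inl w) (Sum.inl v)) ≤
        ∑ w ∈ X₁, G.edgesBetween v w := by
      intro v hv
      have hax : (∑ w ∈ X₁, G.edgesBetween v w) =
          ∑ w ∈ SC, (if Reach G s f (Sum.inl w) then G.edgesBetween v w else 0) := by
        rw [hX₁, hSC, ← Finset.sum_filter, Finset.filter_filter]
      rw [hax]
      apply Finset.sum_le_sum
      intro w hw
      have hwS : w ∉ S := by
        rw [hSC] at hw
        simpa using hw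
      by_cases hr : Reach G s f (Sum.inl w)
      · have hvw : w ≠ v := fun h => hwS (h ▸ hv)
        have : f (Sum.inl w) (Sum.inl v) ≤ G.cap s (Sum.inl w) (Sum.inl v) := hf.1 _ _
        rw [if_pos hr, edgesBetween_comm]
        simpa [Multigraph.cap, hvw] using this
      · rw [sat_BA G s f hf (hS v hv) hr, if_neg hr]
    exact Finset.sum_le_sum this
  have h_O : (∑ v ∈ S, ∑ w ∈ X₂, G.edgesBetween v w) ≤
      ∑ v ∈ S, ∑ w ∈ SC, f (Sum.inl v) (Sum.inl w) := by
    apply Finset.sum_le_sum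
    intro v hv
    have hax : (∑ w ∈ X₂, G.edgesBetween v w) =
        ∑ w ∈ SC, (if ¬ Reach G s f (Sum.inl w) then G.edgesBetween v w else 0) := by
      rw [hX₂, hSC, ← Finset.sum_filter, Finset.filter_filter]
    rw [hax]
    apply Finset.sum_le_sum
    intro w hw
    by_cases hr : Reach G s f (Sum.inl w)
    · simp [hr]
    · rw [if_pos hr, ← sat_AB G s f hf (hS v hv) hr]
  -- convert everything to edge counts
  have hd₁ : ∀ v ∈ S, v ∉ X₁ := by
    intro v hv
    rw [hX₁]
    simp [hv]
  have hd₂ : ∀ v ∈ S, v ∉ X₂ := by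
    intro v hv
    rw [hX₂]
    simp [hv]
  have hUB := pairsum G S X₁ hd₁
  have hLB := pairsum G S X₂ hd₂
  have hD := sum_deg G S
  have hCARD : (Finset.univ.filter fun e : G.E =>
      (Reach G s f (Sum.inl (G.ends e).1) ∧ Reach G s f (Sum.inl (G.ends e).2)) ∧
      ((G.ends e).1 ∈ S ∨ (G.ends e).2 ∈ S)).card =
      ∑ e : G.E, (if (Reach G s f (Sum.inl (G.ends e).1) ∧ Reach G s f (Sum.inl (G.ends e).2)) ∧
        ((G.ends e).1 ∈ S ∨ (G.ends e).2 ∈ S) then 1 else 0) := Finset.card_filter _ _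
  -- the per-edge inequality
  have h_edge : (∑ e : G.E, ((if (G.ends e).1 ∈ S then 1 else 0) +
        (if (G.ends e).2 ∈ S then 1 else 0))) +
      (∑ e : G.E, (if ((G.ends e).1 ∈ S ∧ (G.ends e).2 ∈ X₁) ∨
        ((G.ends e).1 ∈ X₁ ∧ (G.ends e).2 ∈ S) then 1 else 0)) ≤
      2 * (∑ e : G.E, (if (Reach G s f (Sum.inl (G.ends e).1) ∧
            Reach G s f (Sum.inl (G.ends e).2)) ∧
        ((G.ends e).1 ∈ S ∨ (G.ends e).2 ∈ S) then 1 else 0)) +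
      (∑ e : G.E, (if ((G.ends e).1 ∈ S ∧ (G.ends e).2 ∈ X₂) ∨
        ((G.ends e).1 ∈ X₂ ∧ (G.ends e).2 ∈ S) then 1 else 0)) := by
    rw [← Finset.sum_add_distrib, Finset.mul_sum, ← Finset.sum_add_distrib]
    apply Finset.sum_le_sum
    intro e _
    have hm₁ : ∀ u : G.V, u ∈ X₁ ↔ (u ∉ S ∧ Reach G s f (Sum.inl u)) := by
      intro u
      rw [hX₁]
      simp
    have hm₂ : ∀ u : G.V, u ∈ X₂ ↔ (u ∉ S ∧ ¬ Reach G s f (Sum.inl u)) := by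
      intro u
      rw [hX₂]
      simp
    by_cases h1 : (G.ends e).1 ∈ S
    · have h3 : Reach G s f (Sum.inl (G.ends e).1) := hS _ h1
      by_cases h2 : (G.ends e).2 ∈ S
      · have h4 : Reach G s f (Sum.inl (G.ends e).2) := hS _ h2
        simp [hm₁, hm₂, h1, h2, h3, h4]
      · by_cases h4 : Reach G s f (Sum.inl (G.ends e).2)
        · simp [hm₁, hm₂, h1, h2, h3, h4]
        · simp [hm₁, hm₂, h1, h2, h3, h4]
    · by_cases h2 : (G.ends e).2 ∈ S
      · have h4 : Reach G s f (Sum.inl (G.ends e).2) := hS _ h2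
        by_cases h3 : Reach G s f (Sum.inl (G.ends e).1)
        · simp [hm₁, hm₂, h1, h2, h3, h4]
        · simp [hm₁, hm₂, h1, h2, h3, h4]
      · simp [hm₁, hm₂, h1, h2]
  omega

end MarkingOfFlowAux
namespace MarkingOfFlowAux

open Finset

open scoped Classical

variable (G : Multigraph) (s : G.V → ℕ) (f : G.Node → G.Node → ℕ)

/-- Hall condition on the sink side of the cut. -/
lemma hallB (hf : G.IsFlow s f) (hs : ∀ v, s v ≤ G.deg v)
    (T : Finset G.V) (hT : ∀ w ∈ T, ¬ Reach G s f (Sum.inl w)) :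
    (∑ w ∈ T, (G.deg w - s w)) ≤ (Finset.univ.filter fun e : G.E =>
      (¬ Reach G s f (Sum.inl (G.ends e).1) ∧ ¬ Reach G s f (Sum.inl (G.ends e).2)) ∧
      ((G.ends e).1 ∈ T ∨ (G.ends e).2 ∈ T)).card := by
  classical
  set TC : Finset G.V := Finset.univ.filter (fun v => v ∉ T) with hTC
  set Y₁ : Finset G.V := Finset.univ.filter (fun v => v ∉ T ∧ Reach G s f (Sum.inl v)) with hY₁
  set Y₂ : Finset G.V := Finset.univ.filter
    (fun v => v ∉ T ∧ ¬ Reach G s f (Sum.inl v)) with hY₂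
  have step1 : ∀ w ∈ T, (G.deg w - s w) + (∑ v : G.V, f (Sum.inl v) (Sum.inl w)) =
      f (Sum.inl w) (Sum.inr false) + ∑ v : G.V, f (Sum.inl w) (Sum.inl v) := by
    intro w hw
    have h1 := conserve G s hf w
    have h2 := sat_src G s f hf (hT w hw)
    omega
  have h_eq : (∑ w ∈ T, (G.deg w - s w)) + (∑ w ∈ T, ∑ v : G.V, f (Sum.inl v) (Sum.inl w)) =
      (∑ w ∈ T, f (Sum.inl w) (Sum.inr false)) +
        ∑ w ∈ T, ∑ v : G.V, f (Sum.inl w) (Sum.inl v) := by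
    have := Finset.sum_congr rfl step1
    rw [Finset.sum_add_distrib, Finset.sum_add_distrib] at this
    exact this
  have h_cap : (∑ w ∈ T, f (Sum.inl w) (Sum.inr false)) + (∑ w ∈ T, (G.deg w - s w)) ≤
      ∑ w ∈ T, G.deg w := by
    rw [← Finset.sum_add_distrib]
    apply Finset.sum_le_sum
    intro w _
    have h1 : f (Sum.inl w) (Sum.inr false) ≤ s w := hf.1 _ _
    have h2 := hs w
    omega
  have husplit : ∀ g : G.V → ℕ, (∑ v : G.V, g v) = (∑ v ∈ T, g v) + (∑ v ∈ TC, g v) := by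
    intro g
    rw [hTC]
    rw [← Finset.sum_filter_add_sum_filter_not Finset.univ (fun v => v ∈ T) g]
    congr 1
    · congr 1
      ext v
      simp
  have h_in : (∑ w ∈ T, ∑ v : G.V, f (Sum.inl v) (Sum.inl w)) =
      (∑ w ∈ T, ∑ v ∈ T, f (Sum.inl v) (Sum.inl w)) +
      (∑ w ∈ T, ∑ v ∈ TC, f (Sum.inl v) (Sum.inl w)) := by
    rw [← Finset.sum_add_distrib]
    exact Finset.sum_congr rfl fun w _ => husplit _
  have h_out : (∑ w ∈ T, ∑ v : G.V, f (Sum.inl w) (Sum.inl v)) =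
      (∑ w ∈ T, ∑ v ∈ T, f (Sum.inl w) (Sum.inl v)) +
      (∑ w ∈ T, ∑ v ∈ TC, f (Sum.inl w) (Sum.inl v)) := by
    rw [← Finset.sum_add_distrib]
    exact Finset.sum_congr rfl fun w _ => husplit _
  have h_W : (∑ w ∈ T, ∑ v ∈ T, f (Sum.inl v) (Sum.inl w)) =
      (∑ w ∈ T, ∑ v ∈ T, f (Sum.inl w) (Sum.inl v)) := Finset.sum_comm
  have h_O : (∑ w ∈ T, ∑ v ∈ Y₁, G.edgesBetween w v) ≤
      ∑ w ∈ T, ∑ v ∈ TC, f (Sum.inl v) (Sum.inl w) := by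
    apply Finset.sum_le_sum
    intro w hw
    have hax : (∑ v ∈ Y₁, G.edgesBetween w v) =
        ∑ v ∈ TC, (if Reach G s f (Sum.inl v) then G.edgesBetween w v else 0) := by
      rw [hY₁, hTC, ← Finset.sum_filter, Finset.filter_filter]
    rw [hax]
    apply Finset.sum_le_sum
    intro v _
    by_cases hr : Reach G s f (Sum.inl v)
    · rw [if_pos hr, edgesBetween_comm, ← sat_AB G s f hf hr (hT w hw)]
    · simp [hr]
  have h_U : (∑ w ∈ T, ∑ v ∈ TC, f (Sum.inl w) (Sum.inl v)) ≤
      ∑ w ∈ T, ∑ v ∈ Y₂, G.edgesBetween w v := by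
    apply Finset.sum_le_sum
    intro w hw
    have hax : (∑ v ∈ Y₂, G.edgesBetween w v) =
        ∑ v ∈ TC, (if ¬ Reach G s f (Sum.inl v) then G.edgesBetween w v else 0) := by
      rw [hY₂, hTC, ← Finset.sum_filter, Finset.filter_filter]
    rw [hax]
    apply Finset.sum_le_sum
    intro v hv
    have hvT : v ∉ T := by
      rw [hTC] at hv
      simpa using hv
    by_cases hr : Reach G s f (Sum.inl v)
    · rw [sat_BA G s f hf hr (hT w hw)]
      exact Nat.zero_le _
    · have hwv : w ≠ v := fun h => hvT (h ▸ hw)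
      have : f (Sum.inl w) (Sum.inl v) ≤ G.cap s (Sum.inl w) (Sum.inl v) := hf.1 _ _
      rw [if_pos hr]
      simpa [Multigraph.cap, hwv] using this
  have hd₁ : ∀ v ∈ T, v ∉ Y₁ := by
    intro v hv
    rw [hY₁]
    simp [hv]
  have hd₂ : ∀ v ∈ T, v ∉ Y₂ := by
    intro v hv
    rw [hY₂]
    simp [hv]
  have hO' := pairsum G T Y₁ hd₁
  have hU' := pairsum G T Y₂ hd₂
  have hD := sum_deg G T
  have hCARD : (Finset.univ.filter fun e : G.E =>
      (¬ Reach G s f (Sum.inl (G.ends e).1) ∧ ¬ Reach G s f (Sum.inl (G.ends e).2)) ∧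
      ((G.ends e).1 ∈ T ∨ (G.ends e).2 ∈ T)).card =
      ∑ e : G.E, (if (¬ Reach G s f (Sum.inl (G.ends e).1) ∧
          ¬ Reach G s f (Sum.inl (G.ends e).2)) ∧
        ((G.ends e).1 ∈ T ∨ (G.ends e).2 ∈ T) then 1 else 0) := Finset.card_filter _ _
  have h_edge : (∑ e : G.E, ((if (G.ends e).1 ∈ T then 1 else 0) +
        (if (G.ends e).2 ∈ T then 1 else 0))) +
      (∑ e : G.E, (if ((G.ends e).1 ∈ T ∧ (G.ends e).2 ∈ Y₂) ∨
        ((G.ends e).1 ∈ Y₂ ∧ (G.ends e).2 ∈ T) then 1 else 0)) ≤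
      2 * (∑ e : G.E, (if (¬ Reach G s f (Sum.inl (G.ends e).1) ∧
            ¬ Reach G s f (Sum.inl (G.ends e).2)) ∧
        ((G.ends e).1 ∈ T ∨ (G.ends e).2 ∈ T) then 1 else 0)) +
      (∑ e : G.E, (if ((G.ends e).1 ∈ T ∧ (G.ends e).2 ∈ Y₁) ∨
        ((G.ends e).1 ∈ Y₁ ∧ (G.ends e).2 ∈ T) then 1 else 0)) := by
    rw [← Finset.sum_add_distrib, Finset.mul_sum, ← Finset.sum_add_distrib]
    apply Finset.sum_le_sum
    intro e _
    have hm₁ : ∀ u : G.V, u ∈ Y₁ ↔ (u ∉ T ∧ Reach G s f (Sum.inl u)) := by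
      intro u
      rw [hY₁]
      simp
    have hm₂ : ∀ u : G.V, u ∈ Y₂ ↔ (u ∉ T ∧ ¬ Reach G s f (Sum.inl u)) := by
      intro u
      rw [hY₂]
      simp
    by_cases h1 : (G.ends e).1 ∈ T
    · have h3 : ¬ Reach G s f (Sum.inl (G.ends e).1) := hT _ h1
      by_cases h2 : (G.ends e).2 ∈ T
      · have h4 : ¬ Reach G s f (Sum.inl (G.ends e).2) := hT _ h2
        simp [hm₁, hm₂, h1, h2, h3, h4]
      · by_cases h4 : Reach G s f (Sum.inl (G.ends e).2)
        · simp [hm₁, hm₂, h1, h2, h3, h4]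
        · simp [hm₁, hm₂, h1, h2, h3, h4]
    · by_cases h2 : (G.ends e).2 ∈ T
      · have h4 : ¬ Reach G s f (Sum.inl (G.ends e).2) := hT _ h2
        by_cases h3 : Reach G s f (Sum.inl (G.ends e).1)
        · simp [hm₁, hm₂, h1, h2, h3, h4]
        · simp [hm₁, hm₂, h1, h2, h3, h4]
      · simp [hm₁, hm₂, h1, h2]
  omega

end MarkingOfFlowAux
namespace MarkingOfFlowAux

open Finset

open scoped Classical

variable (G : Multigraph) (s : G.V → ℕ) (f : G.Node → G.Node → ℕ)

lemma value_eq_source_sum (hf : G.IsFlow s f) :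
    G.flowValue f = ∑ v : G.V, f (Sum.inr true) (Sum.inl v) := by
  show (∑ x : G.Node, f (Sum.inr true) x) = _
  rw [sum_node]
  have h1 : f (Sum.inr true) (Sum.inr true) = 0 := flow_to_source G s hf _
  have h2 : f (Sum.inr true) (Sum.inr false) = 0 :=
    Nat.le_zero.mp (le_of_le_of_eq (hf.1 _ _) (cap_source_sink G s))
  omega

/-- Decomposition of the value of a flow along the reachability cut. -/
lemma value_decomp (hf : G.IsFlow s f) (hs : ∀ v, s v ≤ G.deg v)
    (hns : ¬ Reach G s f G.sink) :
    G.flowValue f =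
      (∑ v ∈ Finset.univ.filter (fun v => Reach G s f (Sum.inl v)), s v)
      + ((∑ w ∈ Finset.univ.filter (fun w => ¬ Reach G s f (Sum.inl w)), (G.deg w - s w))
      + ∑ v ∈ Finset.univ.filter (fun v => Reach G s f (Sum.inl v)),
          ∑ w ∈ Finset.univ.filter (fun w => ¬ Reach G s f (Sum.inl w)), G.edgesBetween v w) := by
  classical
  set AA : Finset G.V := Finset.univ.filter (fun v => Reach G s f (Sum.inl v)) with hAA
  set BB : Finset G.V := Finset.univ.filter (fun w => ¬ Reach G s f (Sum.inl w)) with hBB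
  have hsplit : ∀ g : G.V → ℕ, (∑ v : G.V, g v) = (∑ v ∈ AA, g v) + (∑ v ∈ BB, g v) := by
    intro g
    rw [hAA, hBB]
    exact (Finset.sum_filter_add_sum_filter_not Finset.univ _ g).symm
  have h0 : G.flowValue f =
      (∑ v ∈ AA, f (Sum.inr true) (Sum.inl v)) + ∑ w ∈ BB, f (Sum.inr true) (Sum.inl w) := by
    rw [value_eq_source_sum G s f hf, hsplit]
  have hB : (∑ w ∈ BB, f (Sum.inr true) (Sum.inl w)) = ∑ w ∈ BB, (G.deg w - s w) := by
    apply Finset.sum_congr rfl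
    intro w hw
    have hw' : ¬ Reach G s f (Sum.inl w) := by
      rw [hBB] at hw
      simpa using hw
    exact sat_src G s f hf hw'
  -- conservation over the reachable side
  have step1 : ∀ v ∈ AA, f (Sum.inr true) (Sum.inl v) +
      (∑ w : G.V, f (Sum.inl w) (Sum.inl v)) =
      s v + ∑ w : G.V, f (Sum.inl v) (Sum.inl w) := by
    intro v hv
    have hv' : Reach G s f (Sum.inl v) := by
      rw [hAA] at hv
      simpa using hv
    have h1 := conserve G s hf v
    have h2 := sat_sink G s f hf hns hv'
    omega
  have h_eq : (∑ v ∈ AA, f (Sum.inr true) (Sum.inl v)) +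
      (∑ v ∈ AA, ∑ w : G.V, f (Sum.inl w) (Sum.inl v)) =
      (∑ v ∈ AA, s v) + ∑ v ∈ AA, ∑ w : G.V, f (Sum.inl v) (Sum.inl w) := by
    have := Finset.sum_congr rfl step1
    rw [Finset.sum_add_distrib, Finset.sum_add_distrib] at this
    exact this
  have h_in : (∑ v ∈ AA, ∑ w : G.V, f (Sum.inl w) (Sum.inl v)) =
      (∑ v ∈ AA, ∑ w ∈ AA, f (Sum.inl w) (Sum.inl v)) +
      (∑ v ∈ AA, ∑ w ∈ BB, f (Sum.inl w) (Sum.inl v)) := by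
    rw [← Finset.sum_add_distrib]
    exact Finset.sum_congr rfl fun v _ => hsplit _
  have h_out : (∑ v ∈ AA, ∑ w : G.V, f (Sum.inl v) (Sum.inl w)) =
      (∑ v ∈ AA, ∑ w ∈ AA, f (Sum.inl v) (Sum.inl w)) +
      (∑ v ∈ AA, ∑ w ∈ BB, f (Sum.inl v) (Sum.inl w)) := by
    rw [← Finset.sum_add_distrib]
    exact Finset.sum_congr rfl fun v _ => hsplit _
  have h_W : (∑ v ∈ AA, ∑ w ∈ AA, f (Sum.inl w) (Sum.inl v)) =
      (∑ v ∈ AA, ∑ w ∈ AA, f (Sum.inl v) (Sum.inl w)) := Finset.sum_comm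
  have h_zero : (∑ v ∈ AA, ∑ w ∈ BB, f (Sum.inl w) (Sum.inl v)) = 0 := by
    apply Finset.sum_eq_zero
    intro v hv
    apply Finset.sum_eq_zero
    intro w hw
    have hv' : Reach G s f (Sum.inl v) := by
      rw [hAA] at hv; simpa using hv
    have hw' : ¬ Reach G s f (Sum.inl w) := by
      rw [hBB] at hw; simpa using hw
    exact sat_BA G s f hf hv' hw'
  have h_sat : (∑ v ∈ AA, ∑ w ∈ BB, f (Sum.inl v) (Sum.inl w)) =
      ∑ v ∈ AA, ∑ w ∈ BB, G.edgesBetween v w := by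
    apply Finset.sum_congr rfl
    intro v hv
    apply Finset.sum_congr rfl
    intro w hw
    have hv' : Reach G s f (Sum.inl v) := by
      rw [hAA] at hv; simpa using hv
    have hw' : ¬ Reach G s f (Sum.inl w) := by
      rw [hBB] at hw; simpa using hw
    exact sat_AB G s f hf hv' hw'
  omega

end MarkingOfFlowAux
namespace MarkingOfFlowAux

open Finset

open scoped Classical

variable (G : Multigraph) (s : G.V → ℕ) (f : G.Node → G.Node → ℕ)

/-- Terminal case: if the sink is not residually reachable, a compatible marking
with at least `flowValue f` crossings exists. -/
lemma terminal (hf : G.IsFlow s f) (hs : ∀ v, s v ≤ G.deg v)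
    (hns : ¬ Reach G s f G.sink) :
    ∃ M : Finset G.Half, G.Compatible s M ∧ G.flowValue f ≤ G.cr M := by
  classical
  set n : G.V → ℕ := fun v => if Reach G s f (Sum.inl v) then s v else G.deg v - s v with hn
  set Ev : G.V → Finset G.E := fun v => Finset.univ.filter fun e =>
    (Reach G s f (Sum.inl (G.ends e).1) ↔ Reach G s f (Sum.inl v)) ∧
    (Reach G s f (Sum.inl (G.ends e).2) ↔ Reach G s f (Sum.inl v)) ∧
    ((G.ends e).1 = v ∨ (G.ends e).2 = v) with hEv
  have hEvmem : ∀ (v : G.V) (e : G.E), e ∈ Ev v ↔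
      ((Reach G s f (Sum.inl (G.ends e).1) ↔ Reach G s f (Sum.inl v)) ∧
      (Reach G s f (Sum.inl (G.ends e).2) ↔ Reach G s f (Sum.inl v)) ∧
      ((G.ends e).1 = v ∨ (G.ends e).2 = v)) := by
    intro v e
    rw [hEv]
    simp
  -- the number of tokens at a vertex
  have fib : ∀ v : G.V,
      (Finset.univ.filter fun p : (Σ u : G.V, Fin (n u)) => p.1 = v).card = n v := by
    intro v
    have himg : (Finset.univ.filter fun p : (Σ u : G.V, Fin (n u)) => p.1 = v) =
        Finset.univ.image (fun i : Fin (n v) => (⟨v, i⟩ : Σ u : G.V, Fin (n u))) := by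
      ext p
      simp only [Finset.mem_filter, Finset.mem_univ, true_and, Finset.mem_image]
      constructor
      · obtain ⟨u, i⟩ := p
        rintro rfl
        exact ⟨i, rfl⟩
      · rintro ⟨i, rfl⟩
        rfl
    rw [himg, Finset.card_image_of_injective _ sigma_mk_injective]
    simp
  -- Hall's condition
  have hall : ∀ s' : Finset (Σ u : G.V, Fin (n u)),
      s'.card ≤ (s'.biUnion fun p => Ev p.1).card := by
    intro s'
    set S : Finset G.V := s'.image Sigma.fst with hS
    have hcard1 : s'.card = ∑ v ∈ S, (s'.filter fun p => p.1 = v).card :=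
      Finset.card_eq_sum_card_fiberwise (fun p hp => Finset.mem_image_of_mem _ hp)
    have hfiber : ∀ v : G.V, (s'.filter fun p => p.1 = v).card ≤ n v := by
      intro v
      refine le_trans (Finset.card_le_card ?_) (le_of_eq (fib v))
      intro p hp
      simp only [Finset.mem_filter, Finset.mem_univ, true_and]
      exact (Finset.mem_filter.mp hp).2
    set SA : Finset G.V := S.filter (fun v => Reach G s f (Sum.inl v)) with hSA
    set SB : Finset G.V := S.filter (fun v => ¬ Reach G s f (Sum.inl v)) with hSB
    have hnsum : (∑ v ∈ S, n v) = (∑ v ∈ SA, s v) + ∑ v ∈ SB, (G.deg v - s v) := by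
      rw [hSA, hSB, ← Finset.sum_filter_add_sum_filter_not S (fun v => Reach G s f (Sum.inl v))]
      congr 1
      · apply Finset.sum_congr rfl
        intro v hv
        rw [hn]
        simp only []
        rw [if_pos (Finset.mem_filter.mp hv).2]
      · apply Finset.sum_congr rfl
        intro v hv
        rw [hn]
        simp only []
        rw [if_neg (Finset.mem_filter.mp hv).2]
    have hbi : (s'.biUnion fun p => Ev p.1) = S.biUnion Ev := by
      rw [hS]
      exact (Finset.image_biUnion).symm
    have hsplitS : S.biUnion Ev = SA.biUnion Ev ∪ SB.biUnion Ev := by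
      ext e
      simp only [Finset.mem_biUnion, Finset.mem_union, hSA, hSB, Finset.mem_filter]
      constructor
      · rintro ⟨v, hv, hev⟩
        by_cases hr : Reach G s f (Sum.inl v)
        · exact Or.inl ⟨v, ⟨hv, hr⟩, hev⟩
        · exact Or.inr ⟨v, ⟨hv, hr⟩, hev⟩
      · rintro (⟨v, ⟨hv, _⟩, hev⟩ | ⟨v, ⟨hv, _⟩, hev⟩) <;> exact ⟨v, hv, hev⟩
    have hdisj : Disjoint (SA.biUnion Ev) (SB.biUnion Ev) := by
      rw [Finset.disjoint_left]
      intro e heA heB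
      obtain ⟨v, hv, hev⟩ := Finset.mem_biUnion.mp heA
      obtain ⟨w, hw, hew⟩ := Finset.mem_biUnion.mp heB
      have h1 := ((hEvmem v e).mp hev).1
      have h2 := ((hEvmem w e).mp hew).1
      have hvr : Reach G s f (Sum.inl v) := (Finset.mem_filter.mp hv).2
      have hwr : ¬ Reach G s f (Sum.inl w) := (Finset.mem_filter.mp hw).2
      exact hwr (h2.mp (h1.mpr hvr))
    have hA_set : SA.biUnion Ev = Finset.univ.filter (fun e : G.E =>
        (Reach G s f (Sum.inl (G.ends e).1) ∧ Reach G s f (Sum.inl (G.ends e).2)) ∧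
        ((G.ends e).1 ∈ SA ∨ (G.ends e).2 ∈ SA)) := by
      ext e
      simp only [Finset.mem_biUnion, Finset.mem_filter, Finset.mem_univ, true_and]
      constructor
      · rintro ⟨v, hv, hev⟩
        obtain ⟨h1, h2, h3⟩ := (hEvmem v e).mp hev
        have hvr : Reach G s f (Sum.inl v) := (Finset.mem_filter.mp hv).2
        refine ⟨⟨h1.mpr hvr, h2.mpr hvr⟩, ?_⟩
        rcases h3 with h3 | h3
        · exact Or.inl (h3 ▸ hv)
        · exact Or.inr (h3 ▸ hv)
      · rintro ⟨⟨hr1, hr2⟩, hor⟩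
        rcases hor with h | h
        · refine ⟨(G.ends e).1, h, (hEvmem _ e).mpr ?_⟩
          exact ⟨iff_of_true hr1 hr1, iff_of_true hr2 hr1, Or.inl rfl⟩
        · refine ⟨(G.ends e).2, h, (hEvmem _ e).mpr ?_⟩
          exact ⟨iff_of_true hr1 hr2, iff_of_true hr2 hr2, Or.inr rfl⟩
    have hB_set : SB.biUnion Ev = Finset.univ.filter (fun e : G.E =>
        (¬ Reach G s f (Sum.inl (G.ends e).1) ∧ ¬ Reach G s f (Sum.inl (G.ends e).2)) ∧
        ((G.ends e).1 ∈ SB ∨ (G.ends e).2 ∈ SB)) := by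
      ext e
      simp only [Finset.mem_biUnion, Finset.mem_filter, Finset.mem_univ, true_and]
      constructor
      · rintro ⟨v, hv, hev⟩
        obtain ⟨h1, h2, h3⟩ := (hEvmem v e).mp hev
        have hvr : ¬ Reach G s f (Sum.inl v) := (Finset.mem_filter.mp hv).2
        refine ⟨⟨fun hc => hvr (h1.mp hc), fun hc => hvr (h2.mp hc)⟩, ?_⟩
        rcases h3 with h3 | h3
        · exact Or.inl (h3 ▸ hv)
        · exact Or.inr (h3 ▸ hv)
      · rintro ⟨⟨hr1, hr2⟩, hor⟩
        rcases hor with h | h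
        · refine ⟨(G.ends e).1, h, (hEvmem _ e).mpr ?_⟩
          exact ⟨iff_of_false hr1 hr1, iff_of_false hr2 hr1, Or.inl rfl⟩
        · refine ⟨(G.ends e).2, h, (hEvmem _ e).mpr ?_⟩
          exact ⟨iff_of_false hr1 hr2, iff_of_false hr2 hr2, Or.inr rfl⟩
    have hallA' := hallA G s f hf hs hns SA (fun v hv => (Finset.mem_filter.mp hv).2)
    have hallB' := hallB G s f hf hs SB (fun v hv => (Finset.mem_filter.mp hv).2)
    have hcards : (S.biUnion Ev).card = (SA.biUnion Ev).card + (SB.biUnion Ev).card := by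
      rw [hsplitS, Finset.card_union_of_disjoint hdisj]
    have hsum2 : s'.card ≤ ∑ v ∈ S, n v := by
      rw [hcard1]
      exact Finset.sum_le_sum fun v _ => hfiber v
    rw [hbi, hcards, ← hA_set] at *
    rw [← hB_set] at hallB'
    omega
  obtain ⟨F, Finj, hFmem⟩ := (Finset.all_card_le_biUnion_card_iff_exists_injective
    (fun p : (Σ u : G.V, Fin (n u)) => Ev p.1)).mp hall
  -- the marked half at each token
  set tok : (Σ u : G.V, Fin (n u)) → G.Half := fun p =>
    if (G.ends (F p)).1 = p.1 then (F p, false) else (F p, true) with htok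
  have hFor : ∀ p, (G.ends (F p)).1 = p.1 ∨ (G.ends (F p)).2 = p.1 :=
    fun p => ((hEvmem _ _).mp (hFmem p)).2.2
  have hFr1 : ∀ p, Reach G s f (Sum.inl (G.ends (F p)).1) ↔ Reach G s f (Sum.inl p.1) :=
    fun p => ((hEvmem _ _).mp (hFmem p)).1
  have hFr2 : ∀ p, Reach G s f (Sum.inl (G.ends (F p)).2) ↔ Reach G s f (Sum.inl p.1) :=
    fun p => ((hEvmem _ _).mp (hFmem p)).2.1
  have t_edge : ∀ p, (tok p).1 = F p := by
    intro p
    rw [htok]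
    by_cases h : (G.ends (F p)).1 = p.1 <;> simp [h]
  have t_vert : ∀ p, G.vertexOf (tok p) = p.1 := by
    intro p
    rw [htok]
    by_cases h : (G.ends (F p)).1 = p.1
    · simp only [if_pos h]
      rw [vertexOf_false]
      exact h
    · simp only [if_neg h]
      rw [vertexOf_true]
      rcases hFor p with h' | h'
      · exact absurd h' h
      · exact h'
  have tok_inj : Function.Injective tok := by
    intro p q h
    apply Finj
    rw [← t_edge p, ← t_edge q, h]
  set tokSet : Finset G.Half := Finset.univ.image tok with htokSet
  have htokmem : ∀ h : G.Half, h ∈ tokSet ↔ ∃ p, tok p = h := by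
    intro h
    rw [htokSet]
    simp
  set M : Finset G.Half := Finset.univ.filter (fun h : G.Half =>
    if Reach G s f (Sum.inl (G.vertexOf h)) then h ∈ tokSet else h ∉ tokSet) with hMdef
  have hMmem : ∀ h : G.Half, h ∈ M ↔
      (if Reach G s f (Sum.inl (G.vertexOf h)) then h ∈ tokSet else h ∉ tokSet) := by
    intro h
    rw [hMdef]
    simp
  have key_tok : ∀ (p) (h : G.Half), h.1 = F p → h ∈ tokSet → h = tok p := by
    intro p h h1 h2
    obtain ⟨q, hq⟩ := (htokmem h).mp h2
    have : F q = F p := by rw [← t_edge q, hq, h1]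
    rw [← hq, Finj this]
  -- compatibility
  have hcomp : G.Compatible s M := by
    intro v
    by_cases hv : Reach G s f (Sum.inl v)
    · have h1 : M.filter (fun h : G.Half => G.vertexOf h = v) =
          Finset.image tok (Finset.univ.filter fun p => p.1 = v) := by
        ext h
        simp only [Finset.mem_filter, Finset.mem_image, Finset.mem_univ, true_and]
        constructor
        · rintro ⟨hM1, hv1⟩
          have hx := (hMmem h).mp hM1
          rw [hv1, if_pos hv] at hx
          obtain ⟨p, hp⟩ := (htokmem h).mp hx
          refine ⟨p, ?_, hp⟩
          rw [← hp, t_vert] at hv1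
          exact hv1
        · rintro ⟨p, hp1, rfl⟩
          refine ⟨?_, by rw [t_vert]; exact hp1⟩
          rw [hMmem, t_vert, hp1, if_pos hv]
          exact (htokmem _).mpr ⟨p, rfl⟩
      rw [h1, Finset.card_image_of_injective _ tok_inj, fib]
      rw [hn]
      simp only []
      rw [if_pos hv]
    · have hsub : Finset.image tok (Finset.univ.filter fun p => p.1 = v) ⊆
          Finset.univ.filter (fun h : G.Half => G.vertexOf h = v) := by
        intro h hh
        obtain ⟨p, hp1, rfl⟩ := Finset.mem_image.mp hh
        simp only [Finset.mem_filter, Finset.mem_univ, true_and]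
        rw [t_vert]
        exact (Finset.mem_filter.mp hp1).2
      have h1 : M.filter (fun h : G.Half => G.vertexOf h = v) =
          (Finset.univ.filter (fun h : G.Half => G.vertexOf h = v)) \
            (Finset.image tok (Finset.univ.filter fun p => p.1 = v)) := by
        ext h
        simp only [Finset.mem_filter, Finset.mem_sdiff, Finset.mem_univ, true_and,
          Finset.mem_image]
        constructor
        · rintro ⟨hM1, hv1⟩
          have hx := (hMmem h).mp hM1
          rw [hv1, if_neg hv] at hx
          refine ⟨hv1, ?_⟩
          rintro ⟨p, hp1, rfl⟩
          exact hx ((htokmem _).mpr ⟨p, rfl⟩)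
        · rintro ⟨hv1, hni⟩
          refine ⟨?_, hv1⟩
          rw [hMmem, hv1, if_neg hv]
          intro hmem
          obtain ⟨p, hp⟩ := (htokmem h).mp hmem
          apply hni
          refine ⟨p, ?_, hp⟩
          rw [← hp, t_vert] at hv1
          exact hv1
      rw [h1, Finset.card_sdiff_of_subset hsub, Finset.card_image_of_injective _ tok_inj, fib]
      have hdeg : (Finset.univ.filter (fun h : G.Half => G.vertexOf h = v)).card = G.deg v :=
        rfl
      rw [hdeg, hn]
      simp only []
      rw [if_neg hv]
      have := hs v
      omega
  -- the crossing edges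
  set EAB : Finset G.E := Finset.univ.filter (fun e : G.E =>
    (Reach G s f (Sum.inl (G.ends e).1) ∧ ¬ Reach G s f (Sum.inl (G.ends e).2)) ∨
    (¬ Reach G s f (Sum.inl (G.ends e).1) ∧ Reach G s f (Sum.inl (G.ends e).2))) with hEAB
  set crossSet : Finset G.E := (Finset.univ.image F) ∪ EAB with hcrossSet
  have hsubset : crossSet ⊆ Finset.univ.filter (fun e : G.E =>
      ((e, false) ∈ M ∧ (e, true) ∉ M) ∨ ((e, false) ∉ M ∧ (e, true) ∈ M)) := by
    intro e he
    simp only [Finset.mem_filter, Finset.mem_univ, true_and]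
    rw [hcrossSet] at he
    rcases Finset.mem_union.mp he with he | he
    · obtain ⟨p, _, rfl⟩ := Finset.mem_image.mp he
      have hb : ((F p), (tok p).2) = tok p := by
        rw [← t_edge p]
      have hre : ∀ c : Bool, (Reach G s f (Sum.inl (G.vertexOf ((F p, c) : G.Half))) ↔
          Reach G s f (Sum.inl p.1)) := by
        intro c
        cases c
        · rw [vertexOf_false]
          exact hFr1 p
        · rw [vertexOf_true]
          exact hFr2 p
      by_cases hv : Reach G s f (Sum.inl p.1)
      · have hmem1 : ((F p, (tok p).2) : G.Half) ∈ M := by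
          rw [hMmem, if_pos ((hre _).mpr hv)]
          exact (htokmem _).mpr ⟨p, hb.symm⟩
        have hmem2 : ((F p, !(tok p).2) : G.Half) ∉ M := by
          rw [hMmem, if_pos ((hre _).mpr hv)]
          intro hc
          have h3 := key_tok p (F p, !(tok p).2) rfl hc
          rw [← hb] at h3
          have h4 : (!(tok p).2) = (tok p).2 := congrArg Prod.snd h3
          simp at h4
        rcases Bool.eq_false_or_eq_true (tok p).2 with h2 | h2
        · rw [h2] at hmem1 hmem2
          simp only [Bool.not_true] at hmem2
          exact Or.inr ⟨hmem2, hmem1⟩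
        · rw [h2] at hmem1 hmem2
          simp only [Bool.not_false] at hmem2
          exact Or.inl ⟨hmem1, hmem2⟩
      · have hmem1 : ((F p, (tok p).2) : G.Half) ∉ M := by
          rw [hMmem, if_neg (fun hc => hv ((hre _).mp hc))]
          intro hc
          exact hc ((htokmem _).mpr ⟨p, hb.symm⟩)
        have hmem2 : ((F p, !(tok p).2) : G.Half) ∈ M := by
          rw [hMmem, if_neg (fun hc => hv ((hre _).mp hc))]
          intro hc
          have h3 := key_tok p (F p, !(tok p).2) rfl hc
          rw [← hb] at h3
          have h4 : (!(tok p).2) = (tok p).2 := congrArg Prod.snd h3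
          simp at h4
        rcases Bool.eq_false_or_eq_true (tok p).2 with h2 | h2
        · rw [h2] at hmem1 hmem2
          simp only [Bool.not_true] at hmem2
          exact Or.inl ⟨hmem2, hmem1⟩
        · rw [h2] at hmem1 hmem2
          simp only [Bool.not_false] at hmem2
          exact Or.inr ⟨hmem1, hmem2⟩
    · have hpred := (Finset.mem_filter.mp (hEAB ▸ he)).2
      have hnotok : ∀ c : Bool, ((e, c) : G.Half) ∉ tokSet := by
        intro c hc
        obtain ⟨q, hq⟩ := (htokmem _).mp hc
        have heq : F q = e := by rw [← t_edge q, hq]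
        have h1 := hFr1 q
        have h2 := hFr2 q
        rw [heq] at h1 h2
        rcases hpred with ⟨ha, hb2⟩ | ⟨ha, hb2⟩
        · exact hb2 (h2.mpr (h1.mp ha))
        · exact ha (h1.mpr (h2.mp hb2))
      rcases hpred with ⟨ha, hb2⟩ | ⟨ha, hb2⟩
      · refine Or.inr ⟨?_, ?_⟩
        · intro hc
          rw [hMmem, vertexOf_false, if_pos ha] at hc
          exact hnotok false hc
        · rw [hMmem, vertexOf_true, if_neg hb2]
          exact hnotok true
      · refine Or.inl ⟨?_, ?_⟩
        · rw [hMmem, vertexOf_false, if_neg ha]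
          exact hnotok false
        · intro hc
          rw [hMmem, vertexOf_true, if_pos hb2] at hc
          exact hnotok true hc
  -- counting
  have hdisjFE : Disjoint (Finset.univ.image F) EAB := by
    rw [Finset.disjoint_left]
    intro e he heB
    obtain ⟨p, _, rfl⟩ := Finset.mem_image.mp he
    have h1 := hFr1 p
    have h2 := hFr2 p
    rcases (Finset.mem_filter.mp (hEAB ▸ heB)).2 with ⟨ha, hb2⟩ | ⟨ha, hb2⟩
    · exact hb2 (h2.mpr (h1.mp ha))
    · exact ha (h1.mpr (h2.mp hb2))
  have hcount : crossSet.card = (∑ v : G.V, n v) + EAB.card := by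
    rw [hcrossSet, Finset.card_union_of_disjoint hdisjFE,
      Finset.card_image_of_injective _ Finj, Finset.card_univ, Fintype.card_sigma]
    simp
  have hnsum2 : (∑ v : G.V, n v) =
      (∑ v ∈ Finset.univ.filter (fun v => Reach G s f (Sum.inl v)), s v) +
      ∑ w ∈ Finset.univ.filter (fun w => ¬ Reach G s f (Sum.inl w)), (G.deg w - s w) := by
    rw [← Finset.sum_filter_add_sum_filter_not Finset.univ (fun v => Reach G s f (Sum.inl v))]
    congr 1
    · apply Finset.sum_congr rfl
      intro v hv
      rw [hn]
      simp only []
      rw [if_pos (Finset.mem_filter.mp hv).2]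
    · apply Finset.sum_congr rfl
      intro v hv
      rw [hn]
      simp only []
      rw [if_neg (Finset.mem_filter.mp hv).2]
  have hEABcount : (∑ v ∈ Finset.univ.filter (fun v => Reach G s f (Sum.inl v)),
      ∑ w ∈ Finset.univ.filter (fun w => ¬ Reach G s f (Sum.inl w)), G.edgesBetween v w) =
      EAB.card := by
    rw [pairsum G _ _ (by intro v hv; simp only [Finset.mem_filter] at hv ⊢; tauto)]
    rw [hEAB, Finset.card_filter]
    apply Finset.sum_congr rfl
    intro e _
    refine if_congr ?_ rfl rfl
    simp only [Finset.mem_filter, Finset.mem_univ, true_and]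
  have hval := value_decomp G s f hf hs hns
  have hcr : crossSet.card ≤ G.cr M := Finset.card_le_card hsubset
  exact ⟨M, hcomp, by omega⟩


end MarkingOfFlowAux
namespace MarkingOfFlowAux

open Finset

variable (G : Multigraph) (s : G.V → ℕ)

lemma main_ex (hs : ∀ v, s v ≤ G.deg v) :
    ∀ (k : ℕ) (f : G.Node → G.Node → ℕ), G.IsFlow s f →
      (∑ v : G.V, s v) ≤ G.flowValue f + k →
      ∃ M : Finset G.Half, G.Compatible s M ∧ G.flowValue f ≤ G.cr M := by
  intro k
  induction k with
  | zero =>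
    intro f hf hk
    by_cases hr : Reach G s f G.sink
    · exfalso
      obtain ⟨g, hg, hgval⟩ := augment G s f hf hr
      have := value_le_sum_s G s hg
      omega
    · exact terminal G s f hf hs hr
  | succ k ih =>
    intro f hf hk
    by_cases hr : Reach G s f G.sink
    · obtain ⟨g, hg, hgval⟩ := augment G s f hf hr
      obtain ⟨M, hM1, hM2⟩ := ih g hg (by omega)
      exact ⟨M, hM1, by omega⟩
    · exact terminal G s f hf hs hr

lemma main (hs : ∀ v, s v ≤ G.deg v) (f : G.Node → G.Node → ℕ) (hf : G.IsFlow s f) :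
    ∃ M : Finset G.Half, G.Compatible s M ∧ G.flowValue f ≤ G.cr M :=
  main_ex G s hs (∑ v : G.V, s v) f hf (by omega)

end MarkingOfFlowAux

/-- For every flow `f` in the network `N_{Γ,s}` there is a compatible
marking `M` with `cr M` at least the value of `f`; in particular `X_{Γ,s} ≤ |∂S|`. -/
theorem marking_of_flow (G : Multigraph) (s : G.V → ℕ)
    (hs : ∀ v : G.V, s v ≤ G.deg v)
    (f : G.Node → G.Node → ℕ) (hf : G.IsFlow s f) :
    (∃ M : Finset G.Half, G.Compatible s M ∧ G.flowValue f ≤ G.cr M) ∧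
      G.maxFlow s ≤ G.area s := by
  have hbdd : BddAbove {k : ℕ | ∃ M : Finset G.Half, G.Compatible s M ∧ G.cr M = k} := by
    refine ⟨Fintype.card G.E, ?_⟩
    rintro x ⟨M, _, rfl⟩
    calc G.cr M ≤ Finset.univ.card := Finset.card_filter_le _ _
      _ = Fintype.card G.E := Finset.card_univ
  refine ⟨MarkingOfFlowAux.main G s hs f hf, ?_⟩
  have hne : G.flowValue f ∈
      {k : ℕ | ∃ f' : G.Node → G.Node → ℕ, G.IsFlow s f' ∧ G.flowValue f' = k} :=
    ⟨f, hf, rfl⟩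
  apply csSup_le (Set.nonempty_of_mem hne)
  rintro k ⟨f', hf', rfl⟩
  obtain ⟨M', h1, h2⟩ := MarkingOfFlowAux.main G s hs f' hf'
  calc G.flowValue f' ≤ G.cr M' := h2
    _ ≤ G.area s := le_csSup hbdd ⟨M', h1, rfl⟩
end

section
/- Let Γ be a finite multigraph and s a counting function on Γ. Then the maximal flow X_{Γ,s} in the network N_{Γ,s} equals the area |∂S| of the pair (Γ, s), i.e. X_{Γ,s} = max over compatible markings M of cr(M). -/
/-!
Every compatible marking `M` carries a flow of value `cr M`: one unit along each crossing edge,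
from the source to the endpoint of its unmarked half, across the edge, and on to the sink. This
gives `area ≤ maxFlow`.

Conversely, fix `M` maximizing `cr`. Moving a mark at `v` onto a half of an edge at `v` whose two
halves are both unmarked keeps `M` compatible and does not create doubly marked edges, so it never
lowers `cr`, and it raises `cr` if the mark came from a doubly marked edge. Following residual
paths of the flow of `M` and moving marks along them, one sees that no vertex reachable from a
vertex with an unmarked edge carries a doubly marked edge. The reachable set is then a cut of
capacity at most `cr M`, and every flow is bounded by every cut.
-/

namespace Multigraph

open Finset

variable {G : Multigraph} {s : G.V → ℕ} {M : Finset G.Half}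

def partner (h : G.Half) : G.Half := (h.1, !h.2)

@[simp] lemma partner_partner (h : G.Half) : partner (partner h) = h := by
  simp [partner]

@[simp] lemma partner_false (e : G.E) : partner (e, false) = (e, true) := rfl

@[simp] lemma partner_true (e : G.E) : partner (e, true) = (e, false) := rfl

@[simp] lemma vertexOf_false (e : G.E) : G.vertexOf (e, false) = (G.ends e).1 := rfl

@[simp] lemma vertexOf_true (e : G.E) : G.vertexOf (e, true) = (G.ends e).2 := rfl

lemma eq_or_eq_partner_of_fst_eq {h h' : G.Half} (he : h'.1 = h.1) :
    h' = h ∨ h' = partner h := by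
  obtain ⟨e, b⟩ := h
  obtain ⟨e', b'⟩ := h'
  obtain rfl : e' = e := he
  cases b <;> cases b' <;> simp [partner]

lemma card_filter_half_eq_sum (P : G.Half → Prop) [DecidablePred P] :
    #{h | P h} = ∑ e, ((if P (e, false) then 1 else 0) + if P (e, true) then 1 else 0) := by
  rw [card_filter, Fintype.sum_prod_type]
  exact sum_congr rfl fun e _ => by rw [Fintype.sum_bool, add_comm]

lemma sum_card_filter_vertexOf (P : G.Half → Prop) [DecidablePred P] (A : Finset G.V) :
    ∑ v ∈ A, #{h | G.vertexOf h = v ∧ P h} = #{h | G.vertexOf h ∈ A ∧ P h} := by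
  rw [card_eq_sum_card_fiberwise (f := G.vertexOf) (t := A) (fun h hh => by simp_all)]
  refine sum_congr rfl fun v hv => congrArg card (ext fun h => ?_)
  simp only [mem_filter, mem_univ, true_and]
  constructor
  · rintro ⟨rfl, hP⟩
    exact ⟨⟨hv, hP⟩, rfl⟩
  · rintro ⟨⟨-, hP⟩, rfl⟩
    exact ⟨rfl, hP⟩

lemma Compatible.card_marked_at (hM : G.Compatible s M) (v : G.V) :
    #{h | G.vertexOf h = v ∧ h ∈ M} = s v := by
  rw [← hM v]
  congr 1
  ext
  simp [and_comm]

lemma Compatible.card_unmarked_at (hM : G.Compatible s M) (v : G.V) :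
    #{h | G.vertexOf h = v ∧ h ∉ M} = G.deg v - s v := by
  have hsplit := card_filter_add_card_filter_not (s := univ.filter (G.vertexOf · = v)) (· ∈ M)
  rw [filter_filter, filter_filter, hM.card_marked_at] at hsplit
  rw [deg]
  omega

lemma Compatible.card_eq (hM : G.Compatible s M) : #M = ∑ v, s v := by
  rw [card_eq_sum_card_fiberwise (f := G.vertexOf) (t := univ) (fun _ _ => mem_univ _)]
  exact sum_congr rfl fun v _ => hM v

lemma Compatible.insert_erase (hM : G.Compatible s M) {h h₀ : G.Half} (hh : h ∈ M)
    (hh₀ : h₀ ∉ M) (hv : G.vertexOf h₀ = G.vertexOf h) :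
    G.Compatible s (insert h₀ (M.erase h)) := by
  intro v
  rw [filter_insert, filter_erase]
  split_ifs with hv₀
  · have hmem : h ∈ M.filter (G.vertexOf · = v) := mem_filter.2 ⟨hh, hv ▸ hv₀⟩
    rw [card_insert_of_notMem (fun h' => hh₀ (mem_filter.1 (mem_of_mem_erase h')).1),
      card_erase_add_one hmem, hM v]
  · have hnot : h ∉ M.filter (G.vertexOf · = v) :=
      fun h' => hv₀ (hv.trans (mem_filter.1 h').2)
    rw [erase_eq_of_notMem hnot, hM v]

lemma exists_compatible (hs : ∀ v, s v ≤ G.deg v) :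
    ∃ M : Finset G.Half, G.Compatible s M := by
  choose T hTsub hTcard using fun v => exists_subset_card_eq (hs v)
  refine ⟨univ.filter fun h => h ∈ T (G.vertexOf h), fun v => ?_⟩
  rw [← hTcard v]
  congr 1
  ext h
  simp only [mem_filter, mem_univ, true_and]
  constructor
  · rintro ⟨hh, rfl⟩
    exact hh
  · intro hh
    obtain rfl : G.vertexOf h = v := (mem_filter.1 (hTsub v hh)).2
    exact ⟨hh, rfl⟩

/-- The arc `inl x → inl y` is dropped for a loop (`x = y`), where it would have capacity `0`. -/
def unitPath (x y : G.V) (a b : G.Node) : ℕ :=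
  (if a = G.source ∧ b = .inl x then 1 else 0) +
    (if a = .inl x ∧ b = .inl y ∧ x ≠ y then 1 else 0) +
    if a = .inl y ∧ b = G.sink then 1 else 0

lemma sum_unitPath_in_eq_out (x y v : G.V) :
    ∑ a, G.unitPath x y a (.inl v) = ∑ b, G.unitPath x y (.inl v) b := by
  simp only [unitPath, source, sink, sum_add_distrib, ite_and, sum_ite_eq', sum_ite_irrel,
    mem_univ, if_true, Sum.inl.injEq, reduceCtorEq, if_false, sum_const_zero]
  by_cases v = x <;> by_cases v = y <;> by_cases x = y <;> simp_all

lemma sum_unitPath_source (x y : G.V) : ∑ b, G.unitPath x y G.source b = 1 := by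
  simp [unitPath, source, sink]

def crossingTails (M : Finset G.Half) : Finset G.Half := {h | h ∉ M ∧ partner h ∈ M}

lemma mem_crossingTails {h : G.Half} : h ∈ crossingTails M ↔ h ∉ M ∧ partner h ∈ M := by
  simp [crossingTails]

lemma injOn_fst_crossingTails : Set.InjOn Prod.fst (crossingTails M : Set G.Half) := by
  intro h hh h' hh' he
  rcases eq_or_eq_partner_of_fst_eq he.symm with rfl | rfl
  · rfl
  · exact absurd (mem_crossingTails.1 hh).2 (mem_crossingTails.1 hh').1

lemma card_crossingTails (M : Finset G.Half) : #(crossingTails M) = G.cr M := by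
  refine card_nbij Prod.fst (fun h hh => ?_) injOn_fst_crossingTails fun e he => ?_
  · obtain ⟨e, _ | _⟩ := h <;> simp_all [crossingTails]
  · simp only [coe_filter, mem_univ, true_and, Set.mem_ofPred_eq] at he
    rcases he with ⟨hf, ht⟩ | ⟨hf, ht⟩
    · exact ⟨(e, true), by simp [crossingTails, hf, ht], rfl⟩
    · exact ⟨(e, false), by simp [crossingTails, hf, ht], rfl⟩

def markFlow (M : Finset G.Half) (a b : G.Node) : ℕ :=
  ∑ h ∈ crossingTails M, G.unitPath (G.vertexOf h) (G.vertexOf (partner h)) a b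

lemma flowValue_markFlow (M : Finset G.Half) : G.flowValue (G.markFlow M) = G.cr M := by
  rw [flowValue]
  simp only [markFlow]
  rw [sum_comm]
  simp only [sum_unitPath_source, sum_const, smul_eq_mul, mul_one, card_crossingTails]

lemma markFlow_le_cap (hM : G.Compatible s M) (a b : G.Node) :
    G.markFlow M a b ≤ G.cap s a b := by
  rcases a with v | (_ | _) <;> rcases b with w | (_ | _) <;>
    simp [markFlow, unitPath, cap, source, sink]
  case inl.inl =>
    split_ifs with hvw
    · subst hvw
      simp_all
    · refine card_le_card_of_injOn Prod.fst (fun h hh => ?_)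
        (injOn_fst_crossingTails.mono (filter_subset _ _))
      obtain ⟨e, _ | _⟩ := h <;> simp_all
  case inl.inr.false =>
    rw [← hM.card_marked_at v]
    refine card_le_card_of_injOn partner (fun h hh => ?_)
      fun h _ h' _ he => by simpa using congrArg partner he
    simp_all [mem_crossingTails]
  case inr.true.inl =>
    rw [← hM.card_unmarked_at w]
    exact card_le_card fun h hh => by simp_all [mem_crossingTails]

lemma isFlow_markFlow (hM : G.Compatible s M) : G.IsFlow s (G.markFlow M) :=
  ⟨markFlow_le_cap hM, fun v => by
    simp only [markFlow]
    rw [sum_comm, sum_comm (s := univ)]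
    exact sum_congr rfl fun h _ => sum_unitPath_in_eq_out _ _ v⟩

lemma _root_.Finset.sum_le_sum_sum_compl_of_conserved {N : Type*} [Fintype N] [DecidableEq N]
    (f : N → N → ℕ) {S : Finset N} {a₀ : N} (ha₀ : a₀ ∈ S) (hin : ∑ a, f a a₀ = 0)
    (hcons : ∀ a ∈ S, a ≠ a₀ → ∑ b, f b a = ∑ b, f a b) :
    ∑ b, f a₀ b ≤ ∑ a ∈ S, ∑ b ∈ Sᶜ, f a b := by
  have hout : ∑ a ∈ S, ∑ b, f a b = ∑ b, f a₀ b + ∑ a ∈ S, ∑ b, f b a := by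
    rw [← add_sum_erase S _ ha₀, ← add_sum_erase S (fun a => ∑ b, f b a) ha₀, hin, zero_add]
    exact congrArg _ (sum_congr rfl fun a ha =>
      (hcons a (mem_of_mem_erase ha) (ne_of_mem_erase ha)).symm)
  have hsplit :
      ∑ a ∈ S, ∑ b, f a b = ∑ a ∈ S, ∑ b ∈ S, f a b + ∑ a ∈ S, ∑ b ∈ Sᶜ, f a b := by
    rw [← sum_add_distrib]
    exact sum_congr rfl fun a _ => (sum_add_sum_compl S _).symm
  have hinner : ∑ a ∈ S, ∑ b ∈ S, f a b ≤ ∑ a ∈ S, ∑ b, f b a := by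
    rw [sum_comm]
    exact sum_le_sum fun a _ => sum_le_sum_of_subset (subset_univ S)
  omega

def boundary (A : Finset G.V) : Finset G.E := {e | Xor ((G.ends e).1 ∈ A) ((G.ends e).2 ∈ A)}

def cutCapacity (s : G.V → ℕ) (A : Finset G.V) : ℕ :=
  ∑ v ∈ A, s v + ∑ v ∈ Aᶜ, (G.deg v - s v) + #(G.boundary A)

lemma sum_sum_edgesBetween_compl (A : Finset G.V) :
    ∑ v ∈ A, ∑ w ∈ Aᶜ, G.edgesBetween v w = #(G.boundary A) := by
  have hpair (p : G.V × G.V) :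
      ∑ v ∈ A, ∑ w ∈ Aᶜ, (if p = (v, w) ∨ p = (w, v) then 1 else 0) =
        if Xor (p.1 ∈ A) (p.2 ∈ A) then 1 else 0 := by
    obtain ⟨x, y⟩ := p
    have hsplit : ∀ v ∈ A, ∀ w ∈ Aᶜ,
        (if (x, y) = (v, w) ∨ (x, y) = (w, v) then 1 else 0) =
          (if x = v ∧ y = w then 1 else 0) + (if y = v ∧ x = w then 1 else 0) := by
      intro v hv w hw
      have : v ≠ w := by rintro rfl; simp_all
      simp only [Prod.mk.injEq]
      by_cases x = v <;> by_cases y = w <;> by_cases y = v <;> by_cases x = w <;> simp_all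
    rw [sum_congr rfl fun v hv => sum_congr rfl fun w hw => hsplit v hv w hw]
    simp only [sum_add_distrib, ite_and, Xor]
    by_cases x ∈ A <;> by_cases y ∈ A <;> simp_all
  simp only [edgesBetween, boundary, card_filter]
  rw [sum_congr rfl fun v _ => sum_comm (s := Aᶜ), sum_comm]
  exact sum_congr rfl fun e _ => hpair (G.ends e)

lemma cap_source (a : G.Node) : G.cap s a G.source = 0 := by
  rcases a with v | (_ | _) <;> rfl

def sourceSide (A : Finset G.V) : Finset G.Node := A.disjSum {true}

lemma compl_sourceSide (A : Finset G.V) : (sourceSide A)ᶜ = Aᶜ.disjSum {false} := by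
  ext (v | b)
  · simp [sourceSide]
  · cases b <;> simp [sourceSide]

lemma sum_cap_sourceSide (A : Finset G.V) :
    ∑ a ∈ sourceSide A, ∑ b ∈ (sourceSide A)ᶜ, G.cap s a b = G.cutCapacity s A := by
  rw [compl_sourceSide, sourceSide, sum_disjSum]
  simp only [sum_disjSum, sum_singleton, cap, cutCapacity, add_zero]
  have hne : ∀ v ∈ A, ∑ w ∈ Aᶜ, (if v = w then 0 else G.edgesBetween v w) =
      ∑ w ∈ Aᶜ, G.edgesBetween v w := fun v hv =>
    sum_congr rfl fun w hw => if_neg (by rintro rfl; simp_all)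
  rw [sum_add_distrib, sum_congr rfl hne, sum_sum_edgesBetween_compl]
  ring

lemma flowValue_le_cutCapacity {f : G.Node → G.Node → ℕ} (hf : G.IsFlow s f)
    (A : Finset G.V) :
    G.flowValue f ≤ G.cutCapacity s A := by
  have hin : ∑ a, f a G.source = 0 :=
    sum_eq_zero fun a _ => Nat.eq_zero_of_le_zero ((hf.1 a _).trans_eq (cap_source a))
  calc G.flowValue f ≤ ∑ a ∈ sourceSide A, ∑ b ∈ (sourceSide A)ᶜ, f a b :=
        sum_le_sum_sum_compl_of_conserved f (by simp [sourceSide, source]) hin ?_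
    _ ≤ ∑ a ∈ sourceSide A, ∑ b ∈ (sourceSide A)ᶜ, G.cap s a b :=
        sum_le_sum fun a _ => sum_le_sum fun b _ => hf.1 a b
    _ = G.cutCapacity s A := sum_cap_sourceSide A
  rintro (v | b) ha hne
  · exact hf.2 v
  · obtain rfl : b = true := by simpa [sourceSide] using ha
    exact absurd rfl hne

def doublyMarked (M : Finset G.Half) : Finset G.E := {e | (e, false) ∈ M ∧ (e, true) ∈ M}

lemma fst_mem_doublyMarked {h : G.Half} :
    h.1 ∈ doublyMarked M ↔ h ∈ M ∧ partner h ∈ M := by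
  obtain ⟨e, b⟩ := h
  cases b <;> simp [doublyMarked, partner, and_comm]

lemma Compatible.cr_add_two_mul_card_doublyMarked (hM : G.Compatible s M) :
    G.cr M + 2 * #(doublyMarked M) = ∑ v, s v := by
  rw [← hM.card_eq, ← filter_univ_mem M, card_filter_half_eq_sum, cr, doublyMarked, card_filter,
    card_filter, mul_sum, ← sum_add_distrib]
  refine sum_congr rfl fun e _ => ?_
  by_cases (e, false) ∈ M <;> by_cases (e, true) ∈ M <;> simp [*]

lemma doublyMarked_insert_erase_subset {h h₀ : G.Half} (hh₀ : h₀ ∉ M)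
    (hp₀ : partner h₀ ∉ M) :
    doublyMarked (insert h₀ (M.erase h)) ⊆ (doublyMarked M).erase h.1 := by
  intro e he
  obtain ⟨e₀, b₀⟩ := h₀
  obtain ⟨e₁, b₁⟩ := h
  simp only [doublyMarked, partner, mem_erase, mem_insert, mem_filter, mem_univ, true_and,
    Prod.ext_iff] at he hh₀ hp₀ ⊢
  cases b₀ <;> cases b₁ <;> grind

def IsOptimal (s : G.V → ℕ) (M : Finset G.Half) : Prop :=
  G.Compatible s M ∧ ∀ M', G.Compatible s M' → G.cr M' ≤ G.cr M

lemma exists_isOptimal (hs : ∀ v, s v ≤ G.deg v) : ∃ M, IsOptimal s M := by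
  classical
  obtain ⟨M₀, hM₀⟩ := exists_compatible hs
  obtain ⟨M, hM, hmax⟩ := exists_max_image {M | G.Compatible s M} G.cr ⟨M₀, by simpa⟩
  exact ⟨M, (mem_filter.1 hM).2, fun M' hM' => hmax M' (by simpa)⟩

lemma IsOptimal.insert_erase (hM : IsOptimal s M) {h h₀ : G.Half} (hh : h ∈ M)
    (hh₀ : h₀ ∉ M) (hp₀ : partner h₀ ∉ M) (hv : G.vertexOf h₀ = G.vertexOf h) :
    IsOptimal s (insert h₀ (M.erase h)) := by
  have hM' := hM.1.insert_erase hh hh₀ hv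
  have hle := (card_le_card (doublyMarked_insert_erase_subset (h := h) hh₀ hp₀)).trans
    (card_erase_le (s := doublyMarked M) (a := h.1))
  have := hM.1.cr_add_two_mul_card_doublyMarked
  have := hM'.cr_add_two_mul_card_doublyMarked
  exact ⟨hM', fun M'' hM'' => (hM.2 M'' hM'').trans (by omega)⟩

def HasUnmarkedEdgeAt (M : Finset G.Half) (v : G.V) : Prop :=
  ∃ h, G.vertexOf h = v ∧ h ∉ M ∧ partner h ∉ M

def HasDoublyMarkedEdgeAt (M : Finset G.Half) (v : G.V) : Prop :=
  ∃ h, G.vertexOf h = v ∧ h ∈ M ∧ partner h ∈ M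

lemma IsOptimal.not_hasDoublyMarkedEdgeAt {v : G.V} (hM : IsOptimal s M)
    (hv : HasUnmarkedEdgeAt M v) : ¬ HasDoublyMarkedEdgeAt M v := by
  rintro ⟨h, rfl, hh, hp⟩
  obtain ⟨h₀, hv₀, hh₀, hp₀⟩ := hv
  have hM' := hM.1.insert_erase hh hh₀ hv₀
  have hlt := card_lt_card ((doublyMarked_insert_erase_subset (h := h) hh₀ hp₀).trans_ssubset
    (erase_ssubset (fst_mem_doublyMarked.2 ⟨hh, hp⟩)))
  have := hM.1.cr_add_two_mul_card_doublyMarked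
  have := hM'.cr_add_two_mul_card_doublyMarked
  have := hM.2 _ hM'
  omega

lemma hasUnmarkedEdgeAt_insert_erase {h₀ h₁ : G.Half} (hh₀ : h₀ ∉ M) (hp₀ : partner h₀ ∉ M)
    (hh₁ : h₁ ∈ M) (hp₁ : partner h₁ ∉ M) :
    HasUnmarkedEdgeAt (insert h₀ (M.erase h₁)) (G.vertexOf (partner h₁)) := by
  refine ⟨partner h₁, rfl, ?_, ?_⟩ <;> simp only [mem_insert, mem_erase, partner_partner]
  · rintro (rfl | ⟨-, hp⟩)
    · exact hp₀ (by rwa [partner_partner])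
    · exact hp₁ hp
  · rintro (rfl | ⟨hne, -⟩)
    · exact hh₀ hh₁
    · exact hne rfl

/-- With `HasUnmarkedEdgeAt M v` (arc `source → v`) and `HasDoublyMarkedEdgeAt M v`
(arc `v → sink`), these are the arcs of the residual network of `markFlow M`: `v → w` along an
edge unless the edge already carries flow from `v` to `w`. -/
def ResidualAdj (M : Finset G.Half) (v w : G.V) : Prop :=
  ∃ h, G.vertexOf h = v ∧ G.vertexOf (partner h) = w ∧ (h ∈ M ∨ partner h ∉ M)

theorem IsOptimal.not_hasDoublyMarkedEdgeAt_getLast :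
    ∀ (l : List G.V) {M : Finset G.Half} {u : G.V}, IsOptimal s M → HasUnmarkedEdgeAt M u →
      (u :: l).IsChain (ResidualAdj M) →
      ¬ HasDoublyMarkedEdgeAt M ((u :: l).getLast (List.cons_ne_nil u l))
  | [], _, _, hM, hu, _ => hM.not_hasDoublyMarkedEdgeAt hu
  | w :: l, M, u, hM, hu, hchain => by
    -- Restart from a later vertex with an unmarked edge; if there is none, move the mark of
    -- the first edge of the path onto the unmarked edge at `u` and continue from `w`.
    by_cases hrestart : ∃ x ∈ w :: l, HasUnmarkedEdgeAt M x
    · obtain ⟨x, hx, hxu⟩ := hrestart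
      obtain ⟨l₁, l₂, hsplit⟩ := List.append_of_mem hx
      rw [hsplit] at hchain ⊢
      rw [List.getLast_cons (by simp), List.getLast_append_of_ne_nil _ (List.cons_ne_nil x l₂)]
      have hlen : l₂.length < l.length + 1 := by -- for `termination_by`
        have := congrArg List.length hsplit
        simp only [List.length_cons, List.length_append] at this
        omega
      exact IsOptimal.not_hasDoublyMarkedEdgeAt_getLast l₂ hM hxu
        (List.isChain_cons_split.1 hchain).2
    push Not at hrestart
    obtain ⟨h₀, rfl, hh₀, hp₀⟩ := hu
    obtain ⟨⟨h₁, hv₁, rfl, hh₁⟩, htail⟩ := List.isChain_cons_cons.1 hchain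
    have h₁M : h₁ ∈ M := by
      by_contra hn
      exact hrestart _ List.mem_cons_self
        ⟨partner h₁, rfl, hh₁.resolve_left hn, by rwa [partner_partner]⟩
    have hp₁ : partner h₁ ∉ M := fun hp =>
      hM.not_hasDoublyMarkedEdgeAt ⟨h₀, rfl, hh₀, hp₀⟩ ⟨h₁, hv₁, h₁M, hp⟩
    have hM' := hM.insert_erase h₁M hh₀ hp₀ hv₁.symm
    have mem_of_ne {x : G.Half} (hx : x ∈ M) (hne : x ≠ h₁) :
        x ∈ insert h₀ (M.erase h₁) :=
      mem_insert_of_mem (mem_erase.2 ⟨hne, hx⟩)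
    have htail' : (G.vertexOf (partner h₁) :: l).IsChain
        (ResidualAdj (insert h₀ (M.erase h₁))) := by
      refine htail.imp_of_mem_imp fun x y hx _ ⟨h, hhx, hhy, hh⟩ => ⟨h, hhx, hhy, Or.inl ?_⟩
      subst hhx
      have hhM : h ∈ M := by
        by_contra hn
        exact hrestart _ hx ⟨h, rfl, hn, hh.resolve_left hn⟩
      refine mem_of_ne hhM ?_
      rintro rfl
      exact hrestart _ hx ⟨h₀, hv₁.symm, hh₀, hp₀⟩
    rintro ⟨g, hg, hgM, hpg⟩
    refine IsOptimal.not_hasDoublyMarkedEdgeAt_getLast l hM'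
      (hasUnmarkedEdgeAt_insert_erase hh₀ hp₀ h₁M hp₁) htail'
      ⟨g, by rwa [List.getLast_cons] at hg, mem_of_ne hgM ?_, mem_of_ne hpg ?_⟩
    · rintro rfl
      exact hp₁ hpg
    · intro he
      rw [← he, partner_partner] at hp₁
      exact hp₁ hgM
termination_by l => l.length

lemma cutCapacity_le_cr (hM : G.Compatible s M) {A : Finset G.V}
    (hunmarked : ∀ v, HasUnmarkedEdgeAt M v → v ∈ A)
    (hclosed : ∀ v w, v ∈ A → ResidualAdj M v w → w ∈ A)
    (hdoubly : ∀ v ∈ A, ¬ HasDoublyMarkedEdgeAt M v) :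
    G.cutCapacity s A ≤ G.cr M := by
  have hin (h : G.Half) (hA : G.vertexOf h ∈ A) (hh : h ∈ M) : partner h ∉ M :=
    fun hp => hdoubly _ hA ⟨h, rfl, hh, hp⟩
  have hout (h : G.Half) (hA : G.vertexOf h ∉ A) (hh : h ∉ M) : partner h ∈ M :=
    by_contra fun hp => hA (hunmarked _ ⟨h, rfl, hh, hp⟩)
  have hcut (h : G.Half) (hA : G.vertexOf h ∈ A) (hA' : G.vertexOf (partner h) ∉ A) :
      h ∉ M ∧ partner h ∈ M := by
    by_contra hc
    exact hA' (hclosed _ _ hA ⟨h, rfl, rfl, by tauto⟩)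
  have hsum_marked : ∑ v ∈ A, s v = #{h | G.vertexOf h ∈ A ∧ h ∈ M} := by
    simp_rw [← hM.card_marked_at]
    exact sum_card_filter_vertexOf _ A
  have hsum_unmarked :
      ∑ v ∈ Aᶜ, (G.deg v - s v) = #{h | G.vertexOf h ∈ Aᶜ ∧ h ∉ M} := by
    simp_rw [← hM.card_unmarked_at]
    exact sum_card_filter_vertexOf _ Aᶜ
  rw [cutCapacity, hsum_marked, hsum_unmarked, card_filter_half_eq_sum, card_filter_half_eq_sum,
    boundary, card_filter, cr, card_filter, ← sum_add_distrib, ← sum_add_distrib]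
  -- both sides are now sums over the edges; compare them termwise
  refine sum_le_sum fun e _ => ?_
  have hin₁ := hin (e, false)
  have hin₂ := hin (e, true)
  have hout₁ := hout (e, false)
  have hout₂ := hout (e, true)
  have hcut₁ := hcut (e, false)
  have hcut₂ := hcut (e, true)
  clear hin hout hcut hclosed hunmarked hdoubly hsum_marked hsum_unmarked
  simp only [vertexOf_false, vertexOf_true, partner_false, partner_true, mem_compl] at *
  by_cases (e, false) ∈ M <;> by_cases (e, true) ∈ M <;> by_cases (G.ends e).1 ∈ A <;>
    by_cases (G.ends e).2 ∈ A <;> simp_all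

lemma IsOptimal.exists_cutCapacity_le_cr (hM : IsOptimal s M) :
    ∃ A, G.cutCapacity s A ≤ G.cr M := by
  classical
  let A : Finset G.V :=
    {v | ∃ u, HasUnmarkedEdgeAt M u ∧ Relation.ReflTransGen (ResidualAdj M) u v}
  refine ⟨A, cutCapacity_le_cr hM.1 (fun v hv => ?_) (fun v w hv hvw => ?_) fun v hv => ?_⟩
  · simpa [A] using ⟨v, hv, .refl⟩
  · obtain ⟨u, hu, huv⟩ := (mem_filter.1 hv).2
    simpa [A] using ⟨u, hu, huv.tail hvw⟩
  · obtain ⟨u, hu, huv⟩ := (mem_filter.1 hv).2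
    obtain ⟨l, hl, rfl⟩ := List.exists_isChain_cons_of_relationReflTransGen huv
    exact hM.not_hasDoublyMarkedEdgeAt_getLast l hu hl

lemma IsOptimal.isGreatest_cr (hM : IsOptimal s M) :
    IsGreatest {k | ∃ M', G.Compatible s M' ∧ G.cr M' = k} (G.cr M) :=
  ⟨⟨M, hM.1, rfl⟩, fun _ ⟨M', hM', hk⟩ => hk ▸ hM.2 M' hM'⟩

lemma IsOptimal.isGreatest_flowValue (hM : IsOptimal s M) :
    IsGreatest {k | ∃ f, G.IsFlow s f ∧ G.flowValue f = k} (G.cr M) := by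
  refine ⟨⟨G.markFlow M, isFlow_markFlow hM.1, flowValue_markFlow M⟩, ?_⟩
  rintro _ ⟨f, hf, rfl⟩
  obtain ⟨A, hA⟩ := hM.exists_cutCapacity_le_cr
  exact (flowValue_le_cutCapacity hf A).trans hA

end Multigraph

/-- The maximal flow `X_{Γ,s}` in the network `N_{Γ,s}` equals the
area `|∂S|` of the pair `(Γ, s)`, i.e. the maximum of `cr M` over compatible markings. -/
theorem maxFlow_eq_area (G : Multigraph) (s : G.V → ℕ)
    (hs : ∀ v : G.V, s v ≤ G.deg v) :
    G.maxFlow s = G.area s := by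
  obtain ⟨M, hM⟩ := Multigraph.exists_isOptimal hs
  rw [Multigraph.maxFlow, Multigraph.area, hM.isGreatest_flowValue.csSup_eq,
    hM.isGreatest_cr.csSup_eq]
end

section
/- For every c > 0 and every integer p ≥ 1, the p-th moment of the Marchenko–Pastur measure π_c is given by ∫ x^p dπ_c(x) = Σ_{k=1}^{p} (1/p)·binom(p,k)·binom(p,k−1)·c^k, i.e. the Narayana polynomial evaluated at c. -/
open MeasureTheory

/-- The density of the absolutely continuous part of the Marchenko–Pastur
distribution with parameter `c`: `√(4c - (x-1-c)²)/(2πx)` on the interval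
`[1+c-2√c, 1+c+2√c]`, and `0` elsewhere. -/
noncomputable def mpDensity (c : ℝ) (x : ℝ) : ℝ :=
  if 1 + c - 2 * Real.sqrt c ≤ x ∧ x ≤ 1 + c + 2 * Real.sqrt c then
    Real.sqrt (4 * c - (x - 1 - c) ^ 2) / (2 * Real.pi * x)
  else 0

/-- The Marchenko–Pastur measure with parameter `c`:
`π_c = max(1-c,0)·δ₀ + mpDensity c · Lebesgue`. -/
noncomputable def mpMeasure (c : ℝ) : Measure ℝ :=
  ENNReal.ofReal (max (1 - c) 0) • Measure.dirac 0 +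
    volume.withDensity fun x => ENNReal.ofReal (mpDensity c x)

open Real Set

/-!
For `p ≥ 1` the atom at `0` contributes nothing and the factor `1 / x` of the density cancels
against `x ^ p`, so the `p`-th moment is `(2π)⁻¹ ∫ x ^ (p - 1) √(4c - (x - 1 - c)²) dx` over the
support: a moment of the semicircle weight with centre `m = 1 + c` and radius `r = 2√c`.
As `x ^ n (r² - (x - m)²) ^ (3/2)` vanishes at both ends of the support, integrating its derivative
gives a three-term recurrence for these moments. The Narayana polynomials satisfy the same
recurrence (coefficientwise, an identity between binomial coefficients) and have the same two
initial values.
-/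

theorem eq_of_second_order_recurrence {R : Type*} [CommRing R] [IsDomain R] {u v a b d : ℕ → R}
    (hd : ∀ n, d n ≠ 0) (h₀ : u 0 = v 0) (h₁ : u 1 = v 1)
    (hu : ∀ n, d n * u (n + 2) = a n * u (n + 1) + b n * u n)
    (hv : ∀ n, d n * v (n + 2) = a n * v (n + 1) + b n * v n) : u = v := by
  funext n
  induction n using Nat.twoStepInduction with
  | zero => exact h₀
  | one => exact h₁
  | more n ih ih' => exact mul_left_cancel₀ (hd n) (by rw [hu, hv, ih, ih'])

lemma HasDerivAt.sqrt_pow_three {f : ℝ → ℝ} {f' x : ℝ} (hf : HasDerivAt f f' x) (hx : 0 < f x) :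
    HasDerivAt (fun y => √(f y) ^ 3) (3 / 2 * f' * √(f x)) x := by
  refine ((hf.sqrt hx.ne').fun_pow 3).congr_deriv ?_
  have hs : √(f x) ≠ 0 := (sqrt_pos.2 hx).ne'
  field_simp
  rw [Nat.cast_ofNat, show 3 - 1 = 2 from rfl, sq_sqrt hx.le]
  ring

section Semicircle

variable {m r : ℝ}

noncomputable def semicircleMoment (m r : ℝ) (n : ℕ) : ℝ :=
  ∫ x in (m - r)..(m + r), x ^ n * √(r ^ 2 - (x - m) ^ 2)

lemma intervalIntegrable_pow_mul_sqrt_semicircle (m r : ℝ) (n : ℕ) (a b : ℝ) :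
    IntervalIntegrable (fun x => x ^ n * √(r ^ 2 - (x - m) ^ 2)) volume a b :=
  Continuous.intervalIntegrable (by fun_prop) a b

/-- The integrand is the derivative of `x ^ n * √(r² - (x - m)²) ^ 3`, which vanishes at `m ± r`. -/
lemma integral_semicircle_by_parts (hr : 0 ≤ r) (n : ℕ) :
    ∫ x in (m - r)..(m + r),
      (n * x ^ (n - 1) * (r ^ 2 - (x - m) ^ 2) - 3 * x ^ n * (x - m)) * √(r ^ 2 - (x - m) ^ 2)
      = 0 := by
  set g : ℝ → ℝ := fun x => r ^ 2 - (x - m) ^ 2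
  have hderiv : ∀ x ∈ Ioo (m - r) (m + r), HasDerivAt (fun x => x ^ n * √(g x) ^ 3)
      ((n * x ^ (n - 1) * g x - 3 * x ^ n * (x - m)) * √(g x)) x := by
    rintro x ⟨h₁, h₂⟩
    have hg : HasDerivAt g (-(2 * (x - m))) x := by
      simpa using ((hasDerivAt_id x).sub_const m).pow 2 |>.const_sub (r ^ 2)
    have hgx : 0 < g x := by simp only [g]; nlinarith
    refine ((hasDerivAt_pow n x).mul (hg.sqrt_pow_three hgx)).congr_deriv ?_
    rw [pow_succ, sq_sqrt hgx.le]
    ring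
  have hcont : Continuous fun x => x ^ n * √(g x) ^ 3 := by fun_prop
  rw [intervalIntegral.integral_eq_sub_of_hasDerivAt_of_le (by linarith) hcont.continuousOn hderiv
    (by apply Continuous.intervalIntegrable; fun_prop)]
  simp [g]

lemma semicircleMoment_one (hr : 0 ≤ r) :
    semicircleMoment m r 1 = m * semicircleMoment m r 0 := by
  have h := integral_semicircle_by_parts (m := m) hr 0
  have hlin : ∀ x : ℝ, ((0 : ℕ) * x ^ (0 - 1) * (r ^ 2 - (x - m) ^ 2) - 3 * x ^ 0 * (x - m))
      * √(r ^ 2 - (x - m) ^ 2)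
      = 3 * m * (x ^ 0 * √(r ^ 2 - (x - m) ^ 2)) - 3 * (x ^ 1 * √(r ^ 2 - (x - m) ^ 2)) := by
    intro x; push_cast; ring
  simp_rw [hlin] at h
  have hi := intervalIntegrable_pow_mul_sqrt_semicircle m r
  rw [intervalIntegral.integral_sub ((hi 0 _ _).const_mul _) ((hi 1 _ _).const_mul _)] at h
  simp only [intervalIntegral.integral_const_mul] at h
  unfold semicircleMoment
  linarith

lemma semicircleMoment_add_two (hr : 0 ≤ r) (n : ℕ) :
    (n + 4) * semicircleMoment m r (n + 2) =
      (2 * n + 5) * m * semicircleMoment m r (n + 1)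
        + (n + 1) * (r ^ 2 - m ^ 2) * semicircleMoment m r n := by
  have h := integral_semicircle_by_parts (m := m) hr (n + 1)
  have hlin : ∀ x : ℝ, (((n + 1 : ℕ) : ℝ) * x ^ (n + 1 - 1) * (r ^ 2 - (x - m) ^ 2)
      - 3 * x ^ (n + 1) * (x - m)) * √(r ^ 2 - (x - m) ^ 2)
      = (n + 1) * (r ^ 2 - m ^ 2) * (x ^ n * √(r ^ 2 - (x - m) ^ 2))
        + (2 * n + 5) * m * (x ^ (n + 1) * √(r ^ 2 - (x - m) ^ 2))
        - (n + 4) * (x ^ (n + 2) * √(r ^ 2 - (x - m) ^ 2)) := by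
    intro x; push_cast; ring
  simp_rw [hlin] at h
  have hi := intervalIntegrable_pow_mul_sqrt_semicircle m r
  rw [intervalIntegral.integral_sub (((hi n _ _).const_mul _).add ((hi (n + 1) _ _).const_mul _))
      ((hi (n + 2) _ _).const_mul _),
    intervalIntegral.integral_add ((hi n _ _).const_mul _) ((hi (n + 1) _ _).const_mul _)] at h
  simp only [intervalIntegral.integral_const_mul] at h
  unfold semicircleMoment
  linarith

lemma semicircleMoment_zero (hr : 0 ≤ r) : semicircleMoment m r 0 = π * r ^ 2 / 2 := by
  rcases hr.eq_or_lt with rfl | hr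
  · simp [semicircleMoment]
  have h := intervalIntegral.integral_comp_mul_add (a := -1) (b := 1)
    (fun x => √(r ^ 2 - (x - m) ^ 2)) hr.ne' m
  have hsub : ∀ t : ℝ, √(r ^ 2 - (r * t + m - m) ^ 2) = r * √(1 - t ^ 2) := by
    intro t
    rw [show r ^ 2 - (r * t + m - m) ^ 2 = r ^ 2 * (1 - t ^ 2) by ring, sqrt_mul (sq_nonneg r),
      sqrt_sq hr.le]
  simp only [hsub, intervalIntegral.integral_const_mul, integral_sqrt_one_sub_sq, smul_eq_mul] at h
  simp only [semicircleMoment, pow_zero, one_mul]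
  rw [show r * -1 + m = m - r by ring, show r * 1 + m = m + r by ring] at h
  field_simp at h ⊢
  linarith

end Semicircle

section Narayana

open Finset

lemma Nat.cast_choose_succ_right {K : Type*} [Field K] [CharZero K] (n k : ℕ) :
    (n.choose (k + 1) : K) = n.choose k * (n - k) / (k + 1) := by
  rw [eq_div_iff (Nat.cast_add_one_ne_zero k)]
  rcases le_or_gt k n with h | h
  · have := congrArg (Nat.cast : ℕ → K) (Nat.choose_succ_right_eq n k)
    push_cast [h] at this
    exact this
  · simp [Nat.choose_eq_zero_of_lt h, Nat.choose_eq_zero_of_lt (Nat.lt_succ_of_lt h)]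

lemma Nat.cast_succ_choose_succ {K : Type*} [Field K] [CharZero K] (n k : ℕ) :
    ((n + 1).choose (k + 1) : K) = (n + 1) * n.choose k / (k + 1) := by
  rw [eq_div_iff (Nat.cast_add_one_ne_zero k)]
  exact_mod_cast (Nat.add_one_mul_choose_eq n k).symm

/-- `narayana q 0 = 0`, so that with truncated subtraction `narayana q (k - j)` is the coefficient
of `c ^ k` in `c ^ j * narayanaPoly q c`. -/
noncomputable def narayana (q : ℕ) : ℕ → ℝ
  | 0 => 0
  | k + 1 => q.choose (k + 1) * q.choose k / q

lemma narayana_eq_zero_of_lt {q k : ℕ} (h : q < k) : narayana q k = 0 := by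
  obtain ⟨k, rfl⟩ : ∃ j, k = j + 1 := ⟨k - 1, by omega⟩
  simp [narayana, Nat.choose_eq_zero_of_lt h]

lemma narayana_recurrence (n k : ℕ) :
    (n + 4) * narayana (n + 3) k =
      (2 * n + 5) * (narayana (n + 2) k + narayana (n + 2) (k - 1))
        - (n + 1) * (narayana (n + 1) k - 2 * narayana (n + 1) (k - 1)
          + narayana (n + 1) (k - 2)) := by
  match k with
  | 0 => simp [narayana]
  | 1 => simp [narayana]; field_simp; ring
  | 2 => simp [narayana, Nat.cast_choose_two]; field_simp; ring
  | i + 3 =>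
    -- every binomial coefficient becomes a rational multiple of `(n + 1).choose i`
    simp only [narayana, show i + 3 - 2 = i + 1 by omega, show i + 3 - 1 = i + 2 by omega,
      Nat.cast_succ_choose_succ (n + 2), Nat.cast_succ_choose_succ (n + 1),
      Nat.cast_choose_succ_right (n + 1)]
    push_cast
    field_simp
    ring

noncomputable def narayanaPoly (q : ℕ) (c : ℝ) : ℝ :=
  ∑ k ∈ range (q + 1), narayana q k * c ^ k

lemma pow_mul_narayanaPoly {q j s : ℕ} (h : q + j < s) (c : ℝ) :
    c ^ j * narayanaPoly q c = ∑ k ∈ range s, narayana q (k - j) * c ^ k := by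
  obtain ⟨t, rfl⟩ : ∃ t, s = j + t := ⟨s - j, by omega⟩
  rw [sum_range_add,
    sum_eq_zero fun k hk => by simp [Nat.sub_eq_zero_of_le (mem_range.1 hk).le, narayana], zero_add, narayanaPoly, mul_sum,
    ← sum_subset (range_subset_range.2 (by omega : q + 1 ≤ t))
      fun k _ hk => by simp [narayana_eq_zero_of_lt (by simpa using hk : q < k)]]
  refine sum_congr rfl fun k _ => ?_
  rw [Nat.add_sub_cancel_left, pow_add]
  ring

lemma narayanaPoly_one (c : ℝ) : narayanaPoly 1 c = c := by
  simp [narayanaPoly, narayana, sum_range_succ]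

lemma narayanaPoly_two (c : ℝ) : narayanaPoly 2 c = c + c ^ 2 := by
  simp [narayanaPoly, narayana, sum_range_succ]

lemma narayanaPoly_eq_sum_Icc (q : ℕ) (c : ℝ) :
    narayanaPoly q c =
      ∑ k ∈ Finset.Icc 1 q, (1 / (q : ℝ)) * (q.choose k : ℝ) * (q.choose (k - 1) : ℝ) * c ^ k := by
  rw [narayanaPoly, sum_range_succ', ← Finset.Ico_add_one_right_eq_Icc, sum_Ico_eq_sum_range]
  simp only [narayana, zero_mul, add_zero, Nat.add_sub_cancel, add_comm 1]
  refine sum_congr rfl fun k _ => ?_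
  ring

lemma narayanaPoly_add_three (n : ℕ) (c : ℝ) :
    (n + 4) * narayanaPoly (n + 3) c =
      (2 * n + 5) * (1 + c) * narayanaPoly (n + 2) c
        - (n + 1) * (1 - c) ^ 2 * narayanaPoly (n + 1) c := by
  have hs : ∀ q j, q + j < n + 4 →
      c ^ j * narayanaPoly q c = ∑ k ∈ range (n + 4), narayana q (k - j) * c ^ k :=
    fun q j h => pow_mul_narayanaPoly h c
  calc (n + 4) * narayanaPoly (n + 3) c = (n + 4) * (c ^ 0 * narayanaPoly (n + 3) c) := by simp
    _ = (2 * n + 5) * (c ^ 0 * narayanaPoly (n + 2) c + c ^ 1 * narayanaPoly (n + 2) c)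
          - (n + 1) * (c ^ 0 * narayanaPoly (n + 1) c - 2 * (c ^ 1 * narayanaPoly (n + 1) c)
            + c ^ 2 * narayanaPoly (n + 1) c) := by
      rw [hs (n + 3) 0 (by omega), hs (n + 2) 0 (by omega), hs (n + 2) 1 (by omega),
        hs (n + 1) 0 (by omega), hs (n + 1) 1 (by omega), hs (n + 1) 2 (by omega)]
      simp only [mul_sum, ← sum_add_distrib, ← sum_sub_distrib]
      refine sum_congr rfl fun k _ => ?_
      linear_combination c ^ k * narayana_recurrence n k
    _ = _ := by ring

end Narayana

section MarchenkoPastur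

variable {c : ℝ}

lemma mpDensity_nonneg (hc : 0 ≤ c) (x : ℝ) : 0 ≤ mpDensity c x := by
  unfold mpDensity
  split_ifs with hx
  · have : 0 ≤ x := by nlinarith [sq_sqrt hc, sq_nonneg (1 - √c)]
    positivity
  · exact le_rfl

lemma measurable_mpDensity (c : ℝ) : Measurable (mpDensity c) :=
  Measurable.ite measurableSet_Icc (by fun_prop) measurable_const

lemma mpDensity_mul_pow_succ (hc : 0 ≤ c) (n : ℕ) (x : ℝ) :
    mpDensity c x * x ^ (n + 1) =
      (Icc (1 + c - 2 * √c) (1 + c + 2 * √c)).indicator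
        (fun x => x ^ n * √((2 * √c) ^ 2 - (x - (1 + c)) ^ 2) / (2 * π)) x := by
  unfold mpDensity
  by_cases hx : 1 + c - 2 * √c ≤ x ∧ x ≤ 1 + c + 2 * √c
  · rw [if_pos hx, indicator_of_mem (show x ∈ Icc _ _ from hx), mul_pow, sq_sqrt hc]
    rcases eq_or_ne x 0 with rfl | hx₀
    -- the division by `x = 0` is junk, but the square root vanishes there
    · rw [zero_pow n.succ_ne_zero, mul_zero, sqrt_eq_zero'.2 (by nlinarith [sq_nonneg (1 - c)]),
        mul_zero, zero_div]
    · rw [show x - 1 - c = x - (1 + c) by ring, show (2 : ℝ) ^ 2 = 4 by norm_num]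
      field_simp
      ring
  · rw [if_neg hx, indicator_of_notMem (show x ∉ Icc _ _ from hx), zero_mul]

lemma integral_pow_succ_mpMeasure (hc : 0 ≤ c) (n : ℕ) :
    ∫ x, x ^ (n + 1) ∂mpMeasure c = semicircleMoment (1 + c) (2 * √c) n / (2 * π) := by
  set ρ : ℝ → NNReal := fun x => (mpDensity c x).toNNReal
  have hρ : Measurable ρ := (measurable_mpDensity c).real_toNNReal
  have hsmul : (fun x => ρ x • x ^ (n + 1)) = (Icc (1 + c - 2 * √c) (1 + c + 2 * √c)).indicator
      (fun x => x ^ n * √((2 * √c) ^ 2 - (x - (1 + c)) ^ 2) / (2 * π)) := by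
    funext x
    rw [NNReal.smul_def, Real.coe_toNNReal _ (mpDensity_nonneg hc x), smul_eq_mul,
      mpDensity_mul_pow_succ hc]
  have hatom : Integrable (fun x : ℝ => x ^ (n + 1)) (Measure.dirac 0) :=
    integrable_dirac (by simp)
  have hcont :
      Integrable (fun x : ℝ => x ^ (n + 1)) (volume.withDensity fun x => (ρ x : ENNReal)) := by
    rw [integrable_withDensity_iff_integrable_smul hρ, hsmul,
      integrable_indicator_iff measurableSet_Icc]
    exact (by fun_prop : Continuous _).integrableOn_Icc
  rw [show mpMeasure c = ENNReal.ofReal (max (1 - c) 0) • Measure.dirac 0 +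
      volume.withDensity (fun x => (ρ x : ENNReal)) from rfl,
    integral_add_measure (hatom.smul_measure ENNReal.ofReal_ne_top) hcont,
    integral_smul_measure, integral_dirac, integral_withDensity_eq_integral_smul hρ, hsmul,
    integral_indicator measurableSet_Icc, integral_Icc_eq_integral_Ioc,
    ← intervalIntegral.integral_of_le (by linarith [sqrt_nonneg c]), intervalIntegral.integral_div]
  simp [semicircleMoment]

lemma semicircleMoment_eq_narayanaPoly (hc : 0 ≤ c) (n : ℕ) :
    semicircleMoment (1 + c) (2 * √c) n = 2 * π * narayanaPoly (n + 1) c := by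
  have hr : 0 ≤ 2 * √c := by positivity
  have hr2 : (2 * √c) ^ 2 = 4 * c := by rw [mul_pow, sq_sqrt hc]; norm_num
  refine congrFun (eq_of_second_order_recurrence (u := semicircleMoment (1 + c) (2 * √c))
    (v := fun n => 2 * π * narayanaPoly (n + 1) c) (d := fun n => n + 4)
    (a := fun n => (2 * n + 5) * (1 + c)) (b := fun n => (n + 1) * (4 * c - (1 + c) ^ 2))
    (fun n => by positivity) ?_ ?_ (fun n => ?_) (fun n => ?_)) n
  · rw [zero_add, semicircleMoment_zero hr, hr2, narayanaPoly_one]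
    ring
  · rw [semicircleMoment_one hr, semicircleMoment_zero hr, hr2, narayanaPoly_two]
    ring
  · rw [semicircleMoment_add_two hr, hr2]
  · linear_combination 2 * π * narayanaPoly_add_three n c

end MarchenkoPastur

/-- For every `c > 0` and `p ≥ 1`, the `p`-th moment of the
Marchenko–Pastur measure `π_c` equals the Narayana polynomial
`∑_{k=1}^p (1/p) binom(p,k) binom(p,k-1) c^k`. -/
theorem mpMeasure_moments (c : ℝ) (hc : 0 < c) (p : ℕ) (hp : 1 ≤ p) :
    ∫ x, x ^ p ∂(mpMeasure c) =
      ∑ k ∈ Finset.Icc 1 p,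
        (1 / (p : ℝ)) * (p.choose k : ℝ) * (p.choose (k - 1) : ℝ) * c ^ k := by
  obtain ⟨n, rfl⟩ : ∃ n, p = n + 1 := ⟨p - 1, by omega⟩
  rw [← narayanaPoly_eq_sum_Icc, integral_pow_succ_mpMeasure hc.le,
    semicircleMoment_eq_narayanaPoly hc.le]
  field_simp
end

section
/- For every integer p ≥ 1, the p-th moment of the Marchenko–Pastur measure π_1 equals the p-th Catalan number: ∫ x^p dπ_1(x) = Cat_p = binom(2p,p)/(p+1). -/
open MeasureTheory

/-!
Substituting `x = 4 sin² t` turns the `p`-th moment `(1/2π) ∫₀⁴ x^(p-1) √(4-(x-2)²) dx` into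
`(16·4^(p-1)/π) ∫₀^{π/2} sin^(2p) t cos² t dt`. Writing `cos² = 1 - sin²`, the Wallis recursion
reduces this integral to `(1/(2p+2)) ∫₀^{π/2} sin^(2p) t dt = π·binom(2p,p) / (4^(p+1) (p+1))`.
-/

open Real Set

theorem mpMeasure_one_eq_withDensity :
    mpMeasure 1 = volume.withDensity fun x => ENNReal.ofReal (mpDensity 1 x) := by
  simp [mpMeasure]

theorem mpDensity_one_eq_indicator :
    mpDensity 1 = (Icc 0 4).indicator fun x => √(4 - (x - 2) ^ 2) / (2 * π * x) := by
  ext x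
  simp only [mpDensity, Real.sqrt_one, indicator_apply, mem_Icc, sub_sub, one_add_one_eq_two]
  norm_num

theorem integral_mpMeasure_one (g : ℝ → ℝ) :
    ∫ x, g x ∂mpMeasure 1 = ∫ x in 0..4, √(4 - (x - 2) ^ 2) / (2 * π * x) * g x := by
  have hnonneg : ∀ x, 0 ≤ mpDensity 1 x := by
    rw [mpDensity_one_eq_indicator]
    refine fun x => indicator_nonneg (fun x (hx : x ∈ Icc 0 4) => ?_) x
    have hx0 := hx.1
    positivity
  have hmeas : Measurable (mpDensity 1) := by
    rw [mpDensity_one_eq_indicator]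
    exact (by fun_prop : Measurable _).indicator measurableSet_Icc
  rw [mpMeasure_one_eq_withDensity, integral_withDensity_eq_integral_toReal_smul
    hmeas.ennreal_ofReal (.of_forall fun _ => ENNReal.ofReal_lt_top)]
  simp only [ENNReal.toReal_ofReal (hnonneg _), smul_eq_mul]
  rw [mpDensity_one_eq_indicator]
  simp only [← indicator_mul_left]
  rw [MeasureTheory.integral_indicator measurableSet_Icc, integral_Icc_eq_integral_Ioc,
    intervalIntegral.integral_of_le zero_le_four]

theorem integral_zero_four_eq_integral_sin_sq (g : ℝ → ℝ) (hg : Continuous g) :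
    ∫ x in 0..4, g x = ∫ t in 0..π / 2, g (4 * sin t ^ 2) * (8 * sin t * cos t) := by
  have hderiv : ∀ t, HasDerivAt (fun t => 4 * sin t ^ 2) (8 * sin t * cos t) t := fun t =>
    (((hasDerivAt_sin t).fun_pow 2).const_mul 4).congr_deriv (by ring)
  have hsubst := intervalIntegral.integral_comp_mul_deriv (a := 0) (b := π / 2)
    (fun t _ => hderiv t) (by fun_prop) hg
  simpa using hsubst.symm

theorem sqrt_four_sub_sq_four_mul_sin_sq {t : ℝ} (ht : t ∈ Icc 0 (π / 2)) :
    √(4 - (4 * sin t ^ 2 - 2) ^ 2) = 4 * sin t * cos t := by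
  have hsin : 0 ≤ sin t := sin_nonneg_of_nonneg_of_le_pi ht.1 (by linarith [ht.2, pi_pos])
  have hcos : 0 ≤ cos t := cos_nonneg_of_mem_Icc ⟨by linarith [ht.1, pi_pos], ht.2⟩
  rw [← sqrt_sq (by positivity : 0 ≤ 4 * sin t * cos t)]
  congr 1
  linear_combination (-16 * sin t ^ 2) * sin_sq_add_cos_sq t

theorem integral_zero_pi_div_two_sin_pow_add_two (n : ℕ) :
    ∫ t in 0..π / 2, sin t ^ (n + 2) = (n + 1) / (n + 2) * ∫ t in 0..π / 2, sin t ^ n := by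
  simp [integral_sin_pow]

theorem integral_sin_pow_mul_cos_sq (n : ℕ) :
    ∫ t in 0..π / 2, sin t ^ n * cos t ^ 2 = (∫ t in 0..π / 2, sin t ^ n) / (n + 2) := by
  have hcos : ∀ t, sin t ^ n * cos t ^ 2 = sin t ^ n - sin t ^ (n + 2) := fun t => by
    linear_combination sin t ^ n * cos_sq_add_sin_sq t
  simp only [hcos]
  rw [intervalIntegral.integral_sub ((continuous_sin.fun_pow n).intervalIntegrable _ _)
    ((continuous_sin.fun_pow (n + 2)).intervalIntegrable _ _),
    integral_zero_pi_div_two_sin_pow_add_two]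
  field_simp
  ring

theorem integral_sin_pow_two_mul (n : ℕ) :
    ∫ t in 0..π / 2, sin t ^ (2 * n) = π / 2 * n.centralBinom / 4 ^ n := by
  induction n with
  | zero => simp
  | succ n ih =>
    have hbinom : (n + 1 : ℝ) * (n + 1).centralBinom = 2 * (2 * n + 1) * n.centralBinom := by
      exact_mod_cast Nat.succ_mul_centralBinom_succ n
    rw [mul_add_one, integral_zero_pi_div_two_sin_pow_add_two, ih]
    push_cast
    field_simp
    linear_combination (-2 * (4 : ℝ) ^ n) * hbinom

theorem integral_pow_mul_sqrt_four_sub_sq (m : ℕ) :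
    ∫ x in 0..4, x ^ m * √(4 - (x - 2) ^ 2) = 2 * π * (m + 1).centralBinom / (m + 2) := by
  rw [integral_zero_four_eq_integral_sin_sq _ (by fun_prop)]
  have hsubst : ∀ t ∈ uIcc 0 (π / 2),
      (4 * sin t ^ 2) ^ m * √(4 - (4 * sin t ^ 2 - 2) ^ 2) * (8 * sin t * cos t) =
        32 * 4 ^ m * (sin t ^ (2 * (m + 1)) * cos t ^ 2) := fun t ht => by
    rw [uIcc_of_le (by positivity)] at ht
    rw [sqrt_four_sub_sq_four_mul_sin_sq ht]
    ring
  rw [intervalIntegral.integral_congr hsubst, intervalIntegral.integral_const_mul,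
    integral_sin_pow_mul_cos_sq, integral_sin_pow_two_mul]
  push_cast
  field_simp
  ring

/-- For every `p ≥ 1`, the `p`-th moment of the Marchenko–Pastur
measure `π₁` equals the `p`-th Catalan number `binom(2p,p)/(p+1)`. -/
theorem mpMeasure_one_moments_catalan (p : ℕ) (hp : 1 ≤ p) :
    ∫ x, x ^ p ∂(mpMeasure 1) = ((2 * p).choose p : ℝ) / (p + 1) := by
  obtain ⟨m, rfl⟩ := Nat.exists_eq_add_of_le' hp
  have hcancel : ∀ x ∈ uIoc 0 4,
      √(4 - (x - 2) ^ 2) / (2 * π * x) * x ^ (m + 1) = x ^ m * √(4 - (x - 2) ^ 2) / (2 * π) :=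
    fun x hx => by
      rw [uIoc_of_le zero_le_four] at hx
      have hx0 := hx.1.ne'
      field_simp
      ring
  rw [integral_mpMeasure_one, intervalIntegral.integral_congr_ae (.of_forall hcancel),
    intervalIntegral.integral_div, integral_pow_mul_sqrt_four_sub_sq,
    ← Nat.centralBinom_eq_two_mul_choose]
  field_simp
  push_cast
  ring
end

section
/- Let Γ be a finite multigraph in which each edge e carries a dimension n_e ≥ 1, and let the vertex set V be partitioned as V = W ⊔ W^c. Let S be the set of half-edges attached to vertices of W (an adapted partition). Then for every choice of dimensions n_e, every choice of unitaries U_v at the vertices, the marginal ρ_S of the associated graph state satisfies exactly H(ρ_S) = Σ_{e ∈ ∂} ln n_e, where ∂ is the set of edges having one endpoint in W and the other in W^c. In particular, if n_e = N for all edges, H(ρ_S) = |∂|·ln N. -/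
open MeasureTheory

/-- Borel-type measurable space on matrices (entrywise product σ-algebra). -/
instance matrixMeasurableSpace {m n α : Type*} [MeasurableSpace α] :
    MeasurableSpace (Matrix m n α) :=
  inferInstanceAs (MeasurableSpace (m → n → α))

/-- The von Neumann entropy `H(ρ) = -∑ λᵢ ln λᵢ` of a (Hermitian) matrix, the sum
running over the eigenvalues, with the conventions `0 ln 0 = 0` (via `Real.log 0 = 0`)
and junk value `0` for non-Hermitian matrices. -/
noncomputable def vnEntropy {ι : Type*} [Fintype ι] [DecidableEq ι]
    (ρ : Matrix ι ι ℂ) : ℝ :=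
  if h : ρ.IsHermitian then -∑ i, h.eigenvalues i * Real.log (h.eigenvalues i) else 0

/-- The Rényi entropy `H_q(ρ) = (1-q)⁻¹ ln Tr(ρ^q)` of a (Hermitian) matrix, where
`Tr(ρ^q) = ∑_{λᵢ ≠ 0} λᵢ^q` is computed by functional calculus on the nonzero
eigenvalues (so that `q = 0` recovers the rank); junk value `0` for non-Hermitian
matrices. -/
noncomputable def renyiEntropy {ι : Type*} [Fintype ι] [DecidableEq ι]
    (q : ℝ) (ρ : Matrix ι ι ℂ) : ℝ :=
  if h : ρ.IsHermitian then
    (1 - q)⁻¹ * Real.log (∑ i, if h.eigenvalues i = 0 then 0 else h.eigenvalues i ^ q)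
  else 0

namespace Multigraph

variable (G : Multigraph)

/-- The index set of the total Hilbert space of the graph state: each half-edge of
the edge `e` carries the space `ℂ^{n e}`. -/
abbrev HIdx (n : G.E → ℕ) := (h : G.Half) → Fin (n h.1)

/-- The index set of the Hilbert space attached to the vertex `v`: the tensor product
of the factors of the half-edges at `v`. -/
abbrev VIdx (n : G.E → ℕ) (v : G.V) :=
  (h : {h : G.Half // G.vertexOf h = v}) → Fin (n h.1.1)

/-- The graph state vector `|Ψ⟩ = (⊗_v U_v)(⊗_e |Φ⁺_e⟩)`, where
`|Φ⁺_e⟩ = (n e)^{-1/2} ∑ᵢ |i⟩⊗|i⟩` is the maximally entangled state on the two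
half-edges of `e`, and `U_v` is a matrix acting on the factors at the vertex `v`. -/
noncomputable def gvec (n : G.E → ℕ) (U : ∀ v : G.V, Matrix (G.VIdx n v) (G.VIdx n v) ℂ) :
    G.HIdx n → ℂ :=
  fun x => ∑ y : G.HIdx n,
    (∏ v : G.V, U v (fun h => x h.1) (fun h => y h.1)) *
      ∏ e : G.E, (if y (e, false) = y (e, true) then ((Real.sqrt (n e) : ℝ) : ℂ)⁻¹ else 0)

/-- Glue an assignment on the half-edges in `S` and one on the half-edges outside `S`
to an assignment on all half-edges. -/
def glue (n : G.E → ℕ) (S : Finset G.Half)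
    (a : (h : {h : G.Half // h ∈ S}) → Fin (n h.1.1))
    (b : (h : {h : G.Half // h ∉ S}) → Fin (n h.1.1)) : G.HIdx n :=
  fun h => if hh : h ∈ S then a ⟨h, hh⟩ else b ⟨h, hh⟩

/-- The marginal `ρ_S = Tr_T |Ψ⟩⟨Ψ|` of the graph state, obtained by the partial
trace over the half-edges outside `S`. -/
noncomputable def gmarg (n : G.E → ℕ) (S : Finset G.Half)
    (U : ∀ v : G.V, Matrix (G.VIdx n v) (G.VIdx n v) ℂ) :
    Matrix ((h : {h : G.Half // h ∈ S}) → Fin (n h.1.1))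
      ((h : {h : G.Half // h ∈ S}) → Fin (n h.1.1)) ℂ :=
  Matrix.of fun a a' =>
    ∑ b : (h : {h : G.Half // h ∉ S}) → Fin (n h.1.1),
      G.gvec n U (G.glue n S a b) * star (G.gvec n U (G.glue n S a' b))

/-- The counting function of a set `S` of half-edges: `s v` is the number of
half-edges of `S` at the vertex `v`. -/
def countOf (S : Finset G.Half) : G.V → ℕ :=
  fun v => (S.filter fun h : G.Half => G.vertexOf h = v).card

end Multigraph

/-!
Since `S` consists of the half-edges at the vertices of `W`, the vertex unitaries split as
`A ⊗ B` (`vertexTensor`) with `A` acting on `S` and `B` on its complement `T`. Reshaping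
`|Ψ⟩` into an `S × T` matrix `X` (`stateMatrix`, so that `ρ_S = X Xᴴ`) gives `X = A Φ Bᵀ`,
where `Φ` (`edgeStateMatrix`) is the reshaped edge state. `Φ` is a tensor product over the
edges: an edge with both ends on the same side contributes a rank-one factor, and a cut
edge `e` contributes `n_e^{-1/2}` times a permutation matrix. Hence `Φ Φᴴ Φ = p Φ` with
`p = ∏_{e ∈ ∂} n_e⁻¹`, and the same holds for `X`; so `ρ_S` has trace one and all its
nonzero eigenvalues equal `p`, i.e. `H(ρ_S) = -ln p = ∑_{e ∈ ∂} ln n_e`.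
-/

open Matrix

namespace Matrix

section PiKron

variable {ι R : Type*} [Fintype ι] [CommSemiring R] {α β γ : ι → Type*}

def piKron (X : ∀ i, Matrix (α i) (β i) R) : Matrix (∀ i, α i) (∀ i, β i) R :=
  of fun a b => ∏ i, X i (a i) (b i)

@[simp]
lemma piKron_apply (X : ∀ i, Matrix (α i) (β i) R) (a : ∀ i, α i) (b : ∀ i, β i) :
    piKron X a b = ∏ i, X i (a i) (b i) := rfl

lemma piKron_mul_piKron [DecidableEq ι] [∀ i, Fintype (β i)] (X : ∀ i, Matrix (α i) (β i) R)
    (Y : ∀ i, Matrix (β i) (γ i) R) : piKron X * piKron Y = piKron fun i => X i * Y i := by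
  ext a c
  simp only [mul_apply, piKron_apply, Fintype.prod_sum, Finset.prod_mul_distrib]

lemma conjTranspose_piKron [StarRing R] (X : ∀ i, Matrix (α i) (β i) R) :
    (piKron X)ᴴ = piKron fun i => (X i)ᴴ := by
  ext b a
  simp [star_prod]

lemma piKron_one [∀ i, DecidableEq (α i)] : piKron (fun i => (1 : Matrix (α i) (α i) R)) = 1 := by
  ext a b
  simp only [piKron_apply, one_apply, Fintype.prod_boole, funext_iff]

lemma piKron_smul (c : ι → R) (X : ∀ i, Matrix (α i) (β i) R) :
    piKron (fun i => c i • X i) = (∏ i, c i) • piKron X := by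
  ext a b
  simp [Finset.prod_mul_distrib]

lemma trace_piKron [DecidableEq ι] [∀ i, Fintype (α i)] (X : ∀ i, Matrix (α i) (α i) R) :
    (piKron X).trace = ∏ i, (X i).trace := by
  simp only [trace, diag_apply, piKron_apply, Fintype.prod_sum]

end PiKron

lemma trace_submatrix_equiv {m n R : Type*} [Fintype m] [Fintype n] [AddCommMonoid R]
    (A : Matrix n n R) (e : m ≃ n) : (A.submatrix e e).trace = A.trace :=
  e.sum_comp fun j => A j j

variable {ι R : Type*} [CommRing R] [StarRing R]

lemma piKron_mem_unitaryGroup [Fintype ι] [DecidableEq ι] {α : ι → Type*}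
    [∀ i, Fintype (α i)] [∀ i, DecidableEq (α i)]
    {X : ∀ i, Matrix (α i) (α i) R} (hX : ∀ i, X i ∈ unitaryGroup (α i) R) :
    piKron X ∈ unitaryGroup (∀ i, α i) R := by
  rw [mem_unitaryGroup_iff', star_eq_conjTranspose, conjTranspose_piKron, piKron_mul_piKron]
  simp_rw [← star_eq_conjTranspose, fun i => mem_unitaryGroup_iff'.mp (hX i), piKron_one]

lemma submatrix_mem_unitaryGroup {m n : Type*} [Fintype m] [DecidableEq m] [Fintype n]
    [DecidableEq n] {A : Matrix n n R} (hA : A ∈ unitaryGroup n R)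
    (e : m ≃ n) : A.submatrix e e ∈ unitaryGroup m R := by
  rw [mem_unitaryGroup_iff', star_eq_conjTranspose, conjTranspose_submatrix,
    submatrix_mul_equiv, ← star_eq_conjTranspose, mem_unitaryGroup_iff'.mp hA,
    submatrix_one_equiv]

variable {m n : Type*} [Fintype m] [Fintype n]

lemma mul_conjTranspose_mul_of_unique_left [Unique m] (Φ : Matrix m n R) :
    Φ * Φᴴ * Φ = (Φ * Φᴴ).trace • Φ := by
  ext a b
  simp only [mul_apply (M := Φ * Φᴴ), Fintype.sum_unique, trace, diag_apply, smul_apply,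
    smul_eq_mul, Subsingleton.elim a default]

lemma mul_conjTranspose_mul_of_unique_right [Unique n] (Φ : Matrix m n R) :
    Φ * Φᴴ * Φ = (Φ * Φᴴ).trace • Φ := by
  have h : Φᴴ * Φ = (Φᴴ * Φ).trace • (1 : Matrix n n R) := by
    ext b b'
    simp [trace, Subsingleton.elim b default, Subsingleton.elim b' default]
  rw [Matrix.mul_assoc, h, trace_mul_comm, Matrix.mul_smul, Matrix.mul_one]

lemma mul_conjTranspose_mul_of_mem_unitaryGroup [DecidableEq m] [DecidableEq n] {A : Matrix m m R}
    {C : Matrix n n R} (hA : A ∈ unitaryGroup m R) (hC : C ∈ unitaryGroup n R)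
    {Φ : Matrix m n R} {c : R} (hΦ : Φ * Φᴴ * Φ = c • Φ) :
    (A * Φ * C) * (A * Φ * C)ᴴ * (A * Φ * C) = c • (A * Φ * C) := by
  have hA' : Aᴴ * A = 1 := mem_unitaryGroup_iff'.mp hA
  have hC' : C * Cᴴ = 1 := mem_unitaryGroup_iff.mp hC
  calc (A * Φ * C) * (A * Φ * C)ᴴ * (A * Φ * C)
      = A * (Φ * (C * Cᴴ) * Φᴴ * (Aᴴ * A) * Φ) * C := by
        simp only [conjTranspose_mul, Matrix.mul_assoc]
    _ = c • (A * Φ * C) := by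
        rw [hA', hC', Matrix.mul_one, Matrix.mul_one, hΦ, Matrix.mul_smul, Matrix.smul_mul]

lemma trace_mul_conjTranspose_of_mem_unitaryGroup [DecidableEq m] [DecidableEq n]
    {A : Matrix m m R} {C : Matrix n n R} (hA : A ∈ unitaryGroup m R)
    (hC : C ∈ unitaryGroup n R) (Φ : Matrix m n R) :
    ((A * Φ * C) * (A * Φ * C)ᴴ).trace = (Φ * Φᴴ).trace := by
  have hA' : Aᴴ * A = 1 := mem_unitaryGroup_iff'.mp hA
  have hC' : C * Cᴴ = 1 := mem_unitaryGroup_iff.mp hC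
  calc ((A * Φ * C) * (A * Φ * C)ᴴ).trace = (A * (Φ * (C * Cᴴ) * Φᴴ * Aᴴ)).trace := by
        simp only [conjTranspose_mul, Matrix.mul_assoc]
    _ = (Φ * Φᴴ).trace := by
        rw [trace_mul_comm, Matrix.mul_assoc, hA', hC', Matrix.mul_one, Matrix.mul_one]

end Matrix

section Entropy

variable {ι : Type*} [Fintype ι] [DecidableEq ι]

lemma Matrix.IsHermitian.eigenvalues_eq_zero_or_eq {ρ : Matrix ι ι ℂ} (hρ : ρ.IsHermitian)
    {p : ℝ} (hsq : ρ * ρ = (p : ℂ) • ρ) (i : ι) :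
    hρ.eigenvalues i = 0 ∨ hρ.eigenvalues i = p := by
  set v : ι → ℂ := ⇑(hρ.eigenvectorBasis i)
  set l := hρ.eigenvalues i
  have hv : ρ *ᵥ v = l • v := hρ.mulVec_eigenvectorBasis i
  have hv0 : v ≠ 0 := by simpa [v] using hρ.eigenvectorBasis.orthonormal.ne_zero i
  have h : (l * l) • v = (p * l) • v := by
    have := congrArg (· *ᵥ v) hsq
    simp only [← mulVec_mulVec, hv, mulVec_smul, smul_mulVec] at this
    rw [mul_smul, mul_smul, this, Complex.coe_smul]
  have : l * l = p * l := smul_left_injective ℝ hv0 h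
  rcases eq_or_ne l 0 with hl | hl
  · exact Or.inl hl
  · exact Or.inr (mul_right_cancel₀ hl this)

lemma vnEntropy_mul_conjTranspose_self {κ : Type*} [Fintype κ] (X : Matrix ι κ ℂ) {p : ℝ}
    (hX : X * Xᴴ * X = (p : ℂ) • X) (htr : (X * Xᴴ).trace = 1) :
    vnEntropy (X * Xᴴ) = -Real.log p := by
  have hρ := isHermitian_mul_conjTranspose_self X
  have hsq : X * Xᴴ * (X * Xᴴ) = (p : ℂ) • (X * Xᴴ) := by
    rw [← Matrix.mul_assoc, hX, Matrix.smul_mul]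
  have hsum : ∑ i, hρ.eigenvalues i = 1 := by
    rw [← RCLike.ofReal_inj (K := ℂ), RCLike.ofReal_sum, ← hρ.trace_eq_sum_eigenvalues, htr,
      RCLike.ofReal_one]
  have hterm : ∀ i, hρ.eigenvalues i * Real.log (hρ.eigenvalues i) =
      hρ.eigenvalues i * Real.log p := fun i => by
    rcases hρ.eigenvalues_eq_zero_or_eq hsq i with h | h <;> simp [h]
  rw [vnEntropy, dif_pos hρ, Finset.sum_congr rfl fun i _ => hterm i, ← Finset.sum_mul, hsum,
    one_mul]

end Entropy

noncomputable def bellAmp (m : ℕ) (y : Bool → Fin m) : ℂ :=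
  if y false = y true then ((Real.sqrt m : ℝ) : ℂ)⁻¹ else 0

lemma inv_sqrt_mul_inv_sqrt (m : ℕ) :
    ((Real.sqrt m : ℝ) : ℂ)⁻¹ * ((Real.sqrt m : ℝ) : ℂ)⁻¹ = (m : ℂ)⁻¹ := by
  rw [← mul_inv, ← Complex.ofReal_mul, Real.mul_self_sqrt (Nat.cast_nonneg m),
    Complex.ofReal_natCast]

lemma sum_bellAmp_mul_star {m : ℕ} (hm : m ≠ 0) :
    ∑ y : Bool → Fin m, bellAmp m y * star (bellAmp m y) = 1 := by
  rw [← (Equiv.boolArrowEquivProd (Fin m)).symm.sum_comp, Fintype.sum_prod_type]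
  simp [bellAmp, apply_ite star, inv_sqrt_mul_inv_sqrt, Finset.sum_ite_eq, hm]

section Bell

variable (P : Bool → Prop) [DecidablePred P] (m : ℕ)

/-- `|Φ⁺⟩ ∈ ℂ^m ⊗ ℂ^m`, its two tensor factors indexed by `Bool`, reshaped into a matrix from
the factors in `P` to the others. -/
noncomputable def bellMatrix : Matrix ({b // P b} → Fin m) ({b // ¬P b} → Fin m) ℂ :=
  of fun u w => bellAmp m ((Equiv.piEquivPiSubtypeProd P _).symm (u, w))

variable {P m}

lemma trace_bellMatrix_mul_conjTranspose (hm : m ≠ 0) :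
    (bellMatrix P m * (bellMatrix P m)ᴴ).trace = 1 := by
  simp only [trace, diag_apply, mul_apply, conjTranspose_apply, bellMatrix, of_apply]
  rw [← Fintype.sum_prod_type' (f := fun u w => bellAmp m _ * star (bellAmp m _)),
    (Equiv.piEquivPiSubtypeProd P _).symm.sum_comp (fun y => bellAmp m y * star (bellAmp m y)),
    sum_bellAmp_mul_star hm]

lemma bellMatrix_mul_conjTranspose_of_mixed {b₀ b₁ : Bool} (h₀ : P b₀) (h₁ : ¬P b₁) :
    bellMatrix P m * (bellMatrix P m)ᴴ = (m : ℂ)⁻¹ • 1 := by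
  have hb : ∀ b, b = b₀ ∨ b = b₁ := by
    have : b₀ ≠ b₁ := fun h => h₁ (h ▸ h₀)
    cases b₀ <;> cases b₁ <;> simp_all
  let _ : Unique {b // P b} :=
    ⟨⟨⟨b₀, h₀⟩⟩, fun ⟨b, h⟩ => Subtype.ext ((hb b).resolve_right fun e => h₁ (e ▸ h))⟩
  let _ : Unique {b // ¬P b} :=
    ⟨⟨⟨b₁, h₁⟩⟩, fun ⟨b, h⟩ => Subtype.ext ((hb b).resolve_left fun e => h (e ▸ h₀))⟩
  have hΦ : bellMatrix P m = ((Real.sqrt m : ℝ) : ℂ)⁻¹ •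
      (1 : Matrix (Fin m) (Fin m) ℂ).submatrix (Equiv.funUnique _ _) (Equiv.funUnique _ _) := by
    ext u w
    cases b₀ <;> cases b₁ <;> first | contradiction |
      (simp [bellMatrix, bellAmp, one_apply, h₀, h₁, eq_comm]; rfl)
  rw [hΦ, conjTranspose_smul, conjTranspose_submatrix, Matrix.smul_mul, Matrix.mul_smul,
    submatrix_mul_equiv, conjTranspose_one, Matrix.mul_one, submatrix_one_equiv, smul_smul]
  simp [inv_sqrt_mul_inv_sqrt]

variable (P m) in
noncomputable def bellWeight : ℝ :=
  if (P false ∧ ¬P true) ∨ (¬P false ∧ P true) then (m : ℝ)⁻¹ else 1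

lemma bellMatrix_mul_conjTranspose_mul (hm : m ≠ 0) :
    bellMatrix P m * (bellMatrix P m)ᴴ * bellMatrix P m =
      (bellWeight P m : ℂ) • bellMatrix P m := by
  by_cases hf : P false <;> by_cases ht : P true
  · have : IsEmpty {b // ¬P b} := ⟨fun ⟨b, hb⟩ => by cases b <;> contradiction⟩
    rw [mul_conjTranspose_mul_of_unique_right, trace_bellMatrix_mul_conjTranspose hm]
    simp [bellWeight, hf, ht]
  · rw [bellMatrix_mul_conjTranspose_of_mixed hf ht, Matrix.smul_mul, Matrix.one_mul]
    simp [bellWeight, hf, ht]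
  · rw [bellMatrix_mul_conjTranspose_of_mixed ht hf, Matrix.smul_mul, Matrix.one_mul]
    simp [bellWeight, hf, ht]
  · have : IsEmpty {b // P b} := ⟨fun ⟨b, hb⟩ => by cases b <;> contradiction⟩
    rw [mul_conjTranspose_mul_of_unique_left, trace_bellMatrix_mul_conjTranspose hm]
    simp [bellWeight, hf, ht]

lemma log_bellWeight :
    Real.log (bellWeight P m) =
      -if (P false ∧ ¬P true) ∨ (¬P false ∧ P true) then Real.log m else 0 := by
  unfold bellWeight
  split_ifs <;> simp

end Bell

lemma neg_log_prod_bellWeight {ι : Type*} [Fintype ι] (P : ι → Bool → Prop)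
    [∀ i, DecidablePred (P i)] {m : ι → ℕ} (hm : ∀ i, m i ≠ 0) :
    -Real.log (∏ i, bellWeight (P i) (m i)) =
      ∑ i ∈ Finset.univ.filter (fun i => (P i false ∧ ¬P i true) ∨ (¬P i false ∧ P i true)),
        Real.log (m i) := by
  have hne : ∀ i ∈ Finset.univ, bellWeight (P i) (m i) ≠ 0 := fun i _ => by
    unfold bellWeight; split_ifs <;> simp [hm i]
  rw [Real.log_prod hne, Finset.sum_filter, ← Finset.sum_neg_distrib]
  simp only [log_bellWeight, neg_neg]

namespace Multigraph

variable (G : Multigraph) (n : G.E → ℕ)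

abbrev PartIdx (p : G.Half → Prop) := (h : {h : G.Half // p h}) → Fin (n h.1.1)

def partIdxEquivEdges (p : G.Half → Prop) :
    G.PartIdx n p ≃ ((e : G.E) → {b // p (e, b)} → Fin (n e)) where
  toFun c e b := c ⟨(e, b.1), b.2⟩
  invFun f h := f h.1.1 ⟨h.1.2, h.2⟩
  left_inv _ := rfl
  right_inv _ := rfl

def partIdxEquivVertices (p : G.Half → Prop) (q : G.V → Prop)
    (hpq : ∀ h, p h ↔ q (G.vertexOf h)) :
    G.PartIdx n p ≃ ((v : {v // q v}) → G.VIdx n v) where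
  toFun c v h := c ⟨h.1, (hpq h.1).2 (h.2.symm ▸ v.2)⟩
  invFun f h := f ⟨G.vertexOf h.1, (hpq h.1).1 h.2⟩ ⟨h.1, rfl⟩
  left_inv _ := rfl
  right_inv f := by
    funext ⟨v, hv⟩ ⟨h, hh⟩
    dsimp only at hh
    subst hh
    rfl

noncomputable def edgeStateMatrix (S : Finset G.Half) :
    Matrix (G.PartIdx n (· ∈ S)) (G.PartIdx n (· ∉ S)) ℂ :=
  of fun c d => ∏ e, bellAmp (n e) fun b => G.glue n S c d (e, b)

lemma edgeStateMatrix_eq_submatrix (S : Finset G.Half) :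
    G.edgeStateMatrix n S = (piKron fun e => bellMatrix (fun b => (e, b) ∈ S) (n e)).submatrix
      (G.partIdxEquivEdges n _) (G.partIdxEquivEdges n _) :=
  rfl

lemma edgeStateMatrix_mul_conjTranspose_mul (hn : ∀ e, n e ≠ 0) (S : Finset G.Half) :
    G.edgeStateMatrix n S * (G.edgeStateMatrix n S)ᴴ * G.edgeStateMatrix n S =
      ((∏ e, bellWeight (fun b => (e, b) ∈ S) (n e) : ℝ) : ℂ) • G.edgeStateMatrix n S := by
  simp only [edgeStateMatrix_eq_submatrix, conjTranspose_submatrix, submatrix_mul_equiv,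
    conjTranspose_piKron, piKron_mul_piKron, bellMatrix_mul_conjTranspose_mul (hn _), piKron_smul,
    Complex.ofReal_prod]
  rfl

lemma trace_edgeStateMatrix_mul_conjTranspose (hn : ∀ e, n e ≠ 0) (S : Finset G.Half) :
    (G.edgeStateMatrix n S * (G.edgeStateMatrix n S)ᴴ).trace = 1 := by
  simp only [edgeStateMatrix_eq_submatrix, conjTranspose_submatrix, submatrix_mul_equiv,
    conjTranspose_piKron, piKron_mul_piKron, trace_submatrix_equiv, trace_piKron,
    trace_bellMatrix_mul_conjTranspose (hn _), Finset.prod_const_one]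

variable (U : ∀ v : G.V, Matrix (G.VIdx n v) (G.VIdx n v) ℂ)

noncomputable def vertexTensor (p : G.Half → Prop) (q : G.V → Prop) [DecidablePred q]
    (hpq : ∀ h, p h ↔ q (G.vertexOf h)) : Matrix (G.PartIdx n p) (G.PartIdx n p) ℂ :=
  (piKron fun v : {v // q v} => U v).submatrix (G.partIdxEquivVertices n p q hpq)
    (G.partIdxEquivVertices n p q hpq)

/-- Stated with `[Fintype {h // p h}]` rather than `[DecidablePred p]`: for `p = (· ∈ S)` the
instance must be the one of the coercion of the `Finset` `S` to a type. -/
lemma vertexTensor_mem_unitaryGroup (hU : ∀ v, U v ∈ unitaryGroup (G.VIdx n v) ℂ)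
    (p : G.Half → Prop) [Fintype {h // p h}] (q : G.V → Prop) [DecidablePred q]
    (hpq : ∀ h, p h ↔ q (G.vertexOf h)) :
    G.vertexTensor n U p q hpq ∈ unitaryGroup (G.PartIdx n p) ℂ :=
  submatrix_mem_unitaryGroup (piKron_mem_unitaryGroup (α := fun v : {v // q v} => G.VIdx n v)
    fun v => hU v) _

noncomputable def stateMatrix (S : Finset G.Half) :
    Matrix (G.PartIdx n (· ∈ S)) (G.PartIdx n (· ∉ S)) ℂ :=
  of fun a b => G.gvec n U (G.glue n S a b)

lemma gmarg_eq_stateMatrix_mul_conjTranspose (S : Finset G.Half) :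
    G.gmarg n S U = G.stateMatrix n U S * (G.stateMatrix n U S)ᴴ := by
  ext a a'
  simp [gmarg, stateMatrix, mul_apply]

variable {S : Finset G.Half} {W : Finset G.V} (hS : ∀ h, h ∈ S ↔ G.vertexOf h ∈ W)
include hS

lemma prod_vertex_glue_eq_vertexTensor_mul (a c : G.PartIdx n (· ∈ S))
    (b d : G.PartIdx n (· ∉ S)) :
    ∏ v, U v (fun h => G.glue n S a b h.1) (fun h => G.glue n S c d h.1) =
      G.vertexTensor n U (· ∈ S) (· ∈ W) hS a c *
        G.vertexTensor n U (· ∉ S) (· ∉ W) (fun h => (hS h).not) b d := by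
  rw [← Fintype.prod_subtype_mul_prod_subtype (· ∈ W)]
  congr 1 <;> refine Finset.prod_congr rfl fun v _ => ?_ <;> congr 1 <;> funext h
  · exact dif_pos ((hS h.1).2 (h.2.symm ▸ v.2))
  · exact dif_pos ((hS h.1).2 (h.2.symm ▸ v.2))
  · exact dif_neg fun hh => v.2 (h.2 ▸ (hS h.1).1 hh)
  · exact dif_neg fun hh => v.2 (h.2 ▸ (hS h.1).1 hh)

lemma stateMatrix_eq_vertexTensor_mul :
    G.stateMatrix n U S = G.vertexTensor n U (· ∈ S) (· ∈ W) hS * G.edgeStateMatrix n S *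
      (G.vertexTensor n U (· ∉ S) (· ∉ W) (fun h => (hS h).not))ᵀ := by
  ext a b
  have hglue : ∀ c d, (Equiv.piEquivPiSubtypeProd (· ∈ S) _).symm (c, d) = G.glue n S c d :=
    fun _ _ => rfl
  calc G.stateMatrix n U S a b
      = ∑ c, ∑ d, G.vertexTensor n U (· ∈ S) (· ∈ W) hS a c *
          G.vertexTensor n U (· ∉ S) (· ∉ W) (fun h => (hS h).not) b d *
            G.edgeStateMatrix n S c d := by
        simp only [stateMatrix, gvec, of_apply]
        rw [← (Equiv.piEquivPiSubtypeProd (· ∈ S) _).symm.sum_comp, Fintype.sum_prod_type]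
        simp only [hglue, prod_vertex_glue_eq_vertexTensor_mul G n U hS]
        rfl
    _ = _ := by
        simp only [mul_apply, transpose_apply, Finset.sum_mul]
        rw [Finset.sum_comm]
        simp only [mul_right_comm]

lemma vnEntropy_gmarg_of_adapted (hn : ∀ e, n e ≠ 0)
    (hU : ∀ v, U v ∈ unitaryGroup (G.VIdx n v) ℂ) :
    vnEntropy (G.gmarg n S U) = -Real.log (∏ e, bellWeight (fun b => (e, b) ∈ S) (n e)) := by
  have hA := G.vertexTensor_mem_unitaryGroup n U hU _ _ hS
  have hB := transpose_mem_unitaryGroup_iff.mpr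
    (G.vertexTensor_mem_unitaryGroup n U hU (· ∉ S) (· ∉ W) fun h => (hS h).not)
  rw [G.gmarg_eq_stateMatrix_mul_conjTranspose, G.stateMatrix_eq_vertexTensor_mul n U hS]
  apply vnEntropy_mul_conjTranspose_self
  · exact mul_conjTranspose_mul_of_mem_unitaryGroup hA hB
      (G.edgeStateMatrix_mul_conjTranspose_mul n hn S)
  · rw [trace_mul_conjTranspose_of_mem_unitaryGroup hA hB,
      G.trace_edgeStateMatrix_mul_conjTranspose n hn S]

end Multigraph

/-- For an adapted partition (the surviving half-edges `S` are
exactly those attached to the vertices of `W`), the marginal of the graph state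
satisfies the exact area law `H(ρ_S) = ∑_{e ∈ ∂} ln (n e)`, where `∂` is the set of
edges with one endpoint in `W` and the other outside `W`; in particular if all
edge dimensions equal `N` then `H(ρ_S) = |∂| ln N`. -/
theorem exact_area_law_adapted (G : Multigraph) (n : G.E → ℕ) (hn : ∀ e, 1 ≤ n e)
    (W : Finset G.V)
    (U : ∀ v : G.V, Matrix (G.VIdx n v) (G.VIdx n v) ℂ)
    (hU : ∀ v : G.V, U v ∈ Matrix.unitaryGroup (G.VIdx n v) ℂ) :
    (vnEntropy (G.gmarg n (Finset.univ.filter fun h : G.Half => G.vertexOf h ∈ W) U) =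
        ∑ e ∈ Finset.univ.filter (fun e : G.E =>
            ((G.ends e).1 ∈ W ∧ (G.ends e).2 ∉ W) ∨
              ((G.ends e).1 ∉ W ∧ (G.ends e).2 ∈ W)),
          Real.log (n e)) ∧
      ∀ N : ℕ, (∀ e : G.E, n e = N) →
        vnEntropy (G.gmarg n (Finset.univ.filter fun h : G.Half => G.vertexOf h ∈ W) U) =
          ((Finset.univ.filter fun e : G.E =>
            ((G.ends e).1 ∈ W ∧ (G.ends e).2 ∉ W) ∨
              ((G.ends e).1 ∉ W ∧ (G.ends e).2 ∈ W)).card : ℝ) * Real.log N := by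
  set S := Finset.univ.filter fun h : G.Half => G.vertexOf h ∈ W
  have hS : ∀ h, h ∈ S ↔ G.vertexOf h ∈ W := fun h => Finset.mem_filter_univ h
  have hn' : ∀ e, n e ≠ 0 := fun e => Nat.one_le_iff_ne_zero.mp (hn e)
  have hcut := G.vnEntropy_gmarg_of_adapted n U hS hn' hU
  rw [neg_log_prod_bellWeight _ hn'] at hcut
  simp only [hS, Multigraph.vertexOf, Bool.false_eq_true, ↓reduceIte] at hcut
  refine ⟨hcut, fun N hN => ?_⟩
  rw [hcut, Finset.sum_congr rfl fun e _ => by rw [hN e], Finset.sum_const, nsmul_eq_mul]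
end
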